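/- Let p be a prime with p ≠ 3 and R = ℤ/p²ℤ. Then: (i) V_{p²}(1³_**) is a single G_{p²}-orbit, namely the orbit of (1,0,0,0); (ii) if p ≡ 2 mod 3 then V_{p²}(1³_max) is a single G_{p²}-orbit; (iii) if p ≡ 1 mod 3 then V_{p²}(1³_max) is a union of exactly three G_{p²}-orbits of equal cardinality |V_{p²}(1³_max)|/3, and if u₁, u₂, u₃ ∈ 𝔽_p^× represent the three classes of 𝔽_p^×/(𝔽_p^×)³, then (1,0,0,pu₁), (1,0,0,pu₂), (1,0,0,pu₃) represent the three orbits; (iv) if moreover p ≠ 2, then V_{p²}(1³_*) is a union of exactly two G_{p²}-orbits of equal cardinality |V_{p²}(1³_*)|/2, represented by (1,0,pu₁,0) and (1,0,pu₂,0) for any u₁, u₂ ∈ 𝔽_p^× with u₁/u₂ a nonsquare. -/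

import Mathlib

/- Common setup: the space of binary cubic forms, the twisted GL₂-action,
the dual action, discriminants, finite Fourier transforms and orbital Gauss sums. -/

noncomputable section

open scoped BigOperators

namespace OrbitalL

/-- The space of binary cubic forms `x₁u³ + x₂u²v + x₃uv² + x₄v³` over `R`,
identified with coefficient quadruples. -/
abbrev V (R : Type*) := Fin 4 → R

variable {R : Type*} [CommRing R]

/-- Determinant of an element of `GL₂(R)`, as an element of `R`. -/
def detv (g : Matrix.GeneralLinearGroup (Fin 2) R) : R :=
  Matrix.det (g : Matrix (Fin 2) (Fin 2) R)

/-- The twisted action of `GL₂(R)` on binary cubic forms: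
`(g·x)(u,v) = (det g)⁻¹ · x(αu + γv, βu + δv)`, in coordinates. -/
def gAct (g : Matrix.GeneralLinearGroup (Fin 2) R) (x : V R) : V R :=
  let α := (g : Matrix (Fin 2) (Fin 2) R) 0 0
  let β := (g : Matrix (Fin 2) (Fin 2) R) 0 1
  let γ := (g : Matrix (Fin 2) (Fin 2) R) 1 0
  let δ := (g : Matrix (Fin 2) (Fin 2) R) 1 1
  let d : R := ((Matrix.GeneralLinearGroup.det g)⁻¹ : Rˣ)
  ![d * (α ^ 3 * x 0 + α ^ 2 * β * x 1 + α * β ^ 2 * x 2 + β ^ 3 * x 3),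
    d * (3 * α ^ 2 * γ * x 0 + (α ^ 2 * δ + 2 * α * β * γ) * x 1
          + (β ^ 2 * γ + 2 * α * β * δ) * x 2 + 3 * β ^ 2 * δ * x 3),
    d * (3 * α * γ ^ 2 * x 0 + (β * γ ^ 2 + 2 * α * γ * δ) * x 1
          + (α * δ ^ 2 + 2 * β * γ * δ) * x 2 + 3 * β * δ ^ 2 * x 3),
    d * (γ ^ 3 * x 0 + γ ^ 2 * δ * x 1 + γ * δ ^ 2 * x 2 + δ ^ 3 * x 3)]

/-- The left action of `GL₂(R)` on the dual space `V*`, determined by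
`[x, g∗y] = [(det g)·g⁻¹·x, y]`, in coordinates. -/
def dAct (g : Matrix.GeneralLinearGroup (Fin 2) R) (y : V R) : V R :=
  let α := (g : Matrix (Fin 2) (Fin 2) R) 0 0
  let β := (g : Matrix (Fin 2) (Fin 2) R) 0 1
  let γ := (g : Matrix (Fin 2) (Fin 2) R) 1 0
  let δ := (g : Matrix (Fin 2) (Fin 2) R) 1 1
  let d : R := ((Matrix.GeneralLinearGroup.det g)⁻¹ : Rˣ)
  ![d * (δ ^ 3 * y 0 - 3 * γ * δ ^ 2 * y 1 + 3 * γ ^ 2 * δ * y 2 - γ ^ 3 * y 3),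
    d * (-(β * δ ^ 2) * y 0 + (α * δ ^ 2 + 2 * β * γ * δ) * y 1
          - (β * γ ^ 2 + 2 * α * γ * δ) * y 2 + α * γ ^ 2 * y 3),
    d * (β ^ 2 * δ * y 0 - (β ^ 2 * γ + 2 * α * β * δ) * y 1
          + (α ^ 2 * δ + 2 * α * β * γ) * y 2 - α ^ 2 * γ * y 3),
    d * (-(β ^ 3) * y 0 + 3 * α * β ^ 2 * y 1 - 3 * α ^ 2 * β * y 2 + α ^ 3 * y 3)]

/-- The canonical pairing `[x,y] = x₁y₁ + x₂y₂ + x₃y₃ + x₄y₄` between `V` and `V*`. -/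
def pairV (x y : V R) : R := x 0 * y 0 + x 1 * y 1 + x 2 * y 2 + x 3 * y 3

/-- The discriminant of a binary cubic form. -/
def P (x : V R) : R :=
  (x 1) ^ 2 * (x 2) ^ 2 + 18 * x 0 * x 1 * x 2 * x 3 - 4 * x 0 * (x 2) ^ 3
    - 4 * (x 1) ^ 3 * x 3 - 27 * (x 0) ^ 2 * (x 3) ^ 2

/-- The discriminant on the dual space. -/
def Pstar (y : V R) : R :=
  3 * (y 1) ^ 2 * (y 2) ^ 2 + 6 * y 0 * y 1 * y 2 * y 3 - 4 * y 0 * (y 2) ^ 3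
    - 4 * (y 1) ^ 3 * y 3 - (y 0) ^ 2 * (y 3) ^ 2

instance (N : ℕ) [NeZero N] : Fintype (Matrix.GeneralLinearGroup (Fin 2) (ZMod N)) :=
  inferInstanceAs (Fintype (Matrix (Fin 2) (Fin 2) (ZMod N))ˣ)

/-- The additive character `r ↦ exp(2πi·r/N)` of `ℤ/Nℤ`. -/
def eN (N : ℕ) (r : ZMod N) : ℂ :=
  Complex.exp (2 * Real.pi * Complex.I * (r.val : ℂ) / (N : ℂ))

/-- The orbital Gauss sum `W_N(χ,a,b) = Σ_{g ∈ GL₂(ℤ/Nℤ)} χ(det g)·⟨g·a, b⟩_N`. -/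
def W (N : ℕ) [NeZero N] (χ : DirichletCharacter ℂ N) (a b : V (ZMod N)) : ℂ :=
  ∑ g : Matrix.GeneralLinearGroup (Fin 2) (ZMod N),
    χ (detv g) * eN N (pairV (gAct g a) b)

/-- The finite Fourier transform `f̂(b) = N⁻⁴ Σ_a f(a)·⟨a,b⟩_N`. -/
def fhat (N : ℕ) [NeZero N] (f : V (ZMod N) → ℂ) (b : V (ZMod N)) : ℂ :=
  ((N : ℂ) ^ 4)⁻¹ * ∑ a : V (ZMod N), f a * eN N (pairV a b)

/-- Componentwise reduction `V(ℤ/Nℤ) → V(ℤ/Mℤ)` for `M ∣ N`. -/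
def Vred {N M : ℕ} (h : M ∣ N) (x : V (ZMod N)) : V (ZMod M) :=
  fun i => ZMod.castHom h (ZMod M) (x i)

/- Factorization-type predicates for binary cubic forms over a field. -/

/-- The product of the linear form `l₁u + l₂v` with the quadratic form
`q₁u² + q₂uv + q₃v²`, as a binary cubic form. -/
def linMul (l : R × R) (q : Fin 3 → R) : V R :=
  ![l.1 * q 0, l.1 * q 1 + l.2 * q 0, l.1 * q 2 + l.2 * q 1, l.2 * q 2]

/-- The product of two linear forms, as a binary quadratic form. -/
def lin2Mul (l m : R × R) : Fin 3 → R :=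
  ![l.1 * m.1, l.1 * m.2 + l.2 * m.1, l.2 * m.2]

/-- The product of three linear forms, as a binary cubic form. -/
def lin3Mul (l m n : R × R) : V R :=
  ![l.1 * m.1 * n.1,
    l.1 * m.1 * n.2 + l.1 * m.2 * n.1 + l.2 * m.1 * n.1,
    l.1 * m.2 * n.2 + l.2 * m.1 * n.2 + l.2 * m.2 * n.1,
    l.2 * m.2 * n.2]

/-- Two linear forms are proportional if one is a nonzero scalar multiple of the other. -/
def Proportional (l m : R × R) : Prop := ∃ t : R, t ≠ 0 ∧ m = (t * l.1, t * l.2)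

/-- A binary quadratic form is irreducible if it is nonzero and is not a product
of two linear forms. -/
def IrredQuad (q : Fin 3 → R) : Prop := q ≠ 0 ∧ ¬∃ l m : R × R, q = lin2Mul l m

/-- Type (3): no linear factor (in particular nonzero). -/
def IsType3 (a : V R) : Prop := ¬∃ (l : R × R) (q : Fin 3 → R), l ≠ 0 ∧ a = linMul l q

/-- Type (21): a linear form times an irreducible quadratic form. -/
def IsType21 (a : V R) : Prop :=
  ∃ (l : R × R) (q : Fin 3 → R), l ≠ 0 ∧ IrredQuad q ∧ a = linMul l q

/-- Type (111): a product of three pairwise non-proportional linear forms. -/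
def IsType111 (a : V R) : Prop :=
  ∃ l m n : R × R, l ≠ 0 ∧ m ≠ 0 ∧ n ≠ 0 ∧ ¬Proportional l m ∧ ¬Proportional l n ∧
    ¬Proportional m n ∧ a = lin3Mul l m n

/-- Type (1²1): `l²·m` with `l`, `m` non-proportional linear forms. -/
def IsType121 (a : V R) : Prop :=
  ∃ l m : R × R, l ≠ 0 ∧ m ≠ 0 ∧ ¬Proportional l m ∧ a = lin3Mul l l m

/-- Type (1³): a nonzero scalar times the cube of a linear form. -/
def IsType13 (a : V R) : Prop :=
  ∃ (c : R) (l : R × R), c ≠ 0 ∧ l ≠ 0 ∧ a = c • lin3Mul l l l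

/- The strata of `V(ℤ/p²ℤ)`. -/

theorem p_dvd_p_sq (p : ℕ) : p ∣ p ^ 2 := dvd_pow_self p (by norm_num)

/-- Reduction `V(ℤ/p²ℤ) → V(ℤ/pℤ)`. -/
def Vredp (p : ℕ) (x : V (ZMod (p ^ 2))) : V (ZMod p) := Vred (p_dvd_p_sq p) x

/-- `x ∈ pR` for `R = ℤ/p²ℤ`. -/
def InPR (p : ℕ) (x : ZMod (p ^ 2)) : Prop := ∃ y : ZMod (p ^ 2), x = (p : ZMod (p ^ 2)) * y

/-- `x ∈ pR^× = pR ∖ {0}` for `R = ℤ/p²ℤ`. -/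
def InPRx (p : ℕ) (x : ZMod (p ^ 2)) : Prop := InPR p x ∧ x ≠ 0

def D121max (p : ℕ) : Set (V (ZMod (p ^ 2))) :=
  {a | a 0 = 0 ∧ IsUnit (a 1) ∧ InPR p (a 2) ∧ InPRx p (a 3)}

def D121s (p : ℕ) : Set (V (ZMod (p ^ 2))) :=
  {a | a 0 = 0 ∧ IsUnit (a 1) ∧ InPR p (a 2) ∧ a 3 = 0}

def D13max (p : ℕ) : Set (V (ZMod (p ^ 2))) :=
  {a | IsUnit (a 0) ∧ InPR p (a 1) ∧ InPR p (a 2) ∧ InPRx p (a 3)}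

def D13s (p : ℕ) : Set (V (ZMod (p ^ 2))) :=
  {a | IsUnit (a 0) ∧ InPR p (a 1) ∧ InPRx p (a 2) ∧ a 3 = 0}

def D13ss (p : ℕ) : Set (V (ZMod (p ^ 2))) :=
  {a | IsUnit (a 0) ∧ InPR p (a 1) ∧ a 2 = 0 ∧ a 3 = 0}

/-- The `GL₂`-orbit of a subset of `V R`. -/
def GOrbit (S : Set (V R)) : Set (V R) :=
  {x | ∃ (g : Matrix.GeneralLinearGroup (Fin 2) R) (a : V R), a ∈ S ∧ x = gAct g a}

/-- The `GL₂`-orbit of a single element. -/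
def orbitOf (a : V R) : Set (V R) :=
  {x | ∃ g : Matrix.GeneralLinearGroup (Fin 2) R, x = gAct g a}

def V121max (p : ℕ) : Set (V (ZMod (p ^ 2))) := GOrbit (D121max p)
def V121s (p : ℕ) : Set (V (ZMod (p ^ 2))) := GOrbit (D121s p)
def V13max (p : ℕ) : Set (V (ZMod (p ^ 2))) := GOrbit (D13max p)
def V13s (p : ℕ) : Set (V (ZMod (p ^ 2))) := GOrbit (D13s p)
def V13ss (p : ℕ) : Set (V (ZMod (p ^ 2))) := GOrbit (D13ss p)

/-- The set of forms mod `p²` detecting nonmaximal cubic rings at `p`. -/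
def Vnm (p : ℕ) : Set (V (ZMod (p ^ 2))) :=
  {x | ∃ y : V (ZMod (p ^ 2)), x = (p : ZMod (p ^ 2)) • y} ∪ V13ss p ∪ V13s p ∪ V121s p

/-- The set of forms mod `p²` detecting nonmaximal-or-totally-ramified cubic rings at `p`. -/
def Vnm' (p : ℕ) : Set (V (ZMod (p ^ 2))) := Vnm p ∪ V13max p

/-- The alternating pairing on `V(ℤ/p²ℤ)` induced by identifying `V*` with `V` via `ι`:
`[x,y] = x₄y₁ − (1/3)x₃y₂ + (1/3)x₂y₃ − x₁y₄`. -/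
def pairAlt (p : ℕ) (x y : V (ZMod (p ^ 2))) : ZMod (p ^ 2) :=
  x 3 * y 0 - (3 : ZMod (p ^ 2))⁻¹ * (x 2 * y 1) + (3 : ZMod (p ^ 2))⁻¹ * (x 1 * y 2)
    - x 0 * y 3

/-- The finite Fourier transform on `V(ℤ/p²ℤ)` under the identification of `V*` with `V`. -/
def fhatAlt (p : ℕ) [NeZero p] (f : V (ZMod (p ^ 2)) → ℂ) (b : V (ZMod (p ^ 2))) : ℂ :=
  (((p : ℂ) ^ 2) ^ 4)⁻¹ * ∑ a : V (ZMod (p ^ 2)), f a * eN (p ^ 2) (pairAlt p a b)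

/-- The orbital Gauss sum with trivial character on `V(ℤ/p²ℤ)`, under the
identification of `V*` with `V`. -/
def Walt (p : ℕ) [NeZero p] (a b : V (ZMod (p ^ 2))) : ℂ :=
  ∑ g : Matrix.GeneralLinearGroup (Fin 2) (ZMod (p ^ 2)), eN (p ^ 2) (pairAlt p (gAct g a) b)


set_option linter.dupNamespace false
set_option linter.unreachableTactic false
set_option linter.unusedTactic false
set_option linter.unusedSectionVars false

variable {R : Type*} [CommRing R]

abbrev GL2 (R : Type*) [CommRing R] := Matrix.GeneralLinearGroup (Fin 2) R

/-- entries -/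
def ge (g : GL2 R) (i j : Fin 2) : R := (g : Matrix (Fin 2) (Fin 2) R) i j

/-- inverse determinant -/
def gd (g : GL2 R) : R := ((Matrix.GeneralLinearGroup.det g)⁻¹ : Rˣ)

lemma d_spec (g : GL2 R) :
    gd g * (ge g 0 0 * ge g 1 1 - ge g 0 1 * ge g 1 0) = 1 := by
  have h := Units.inv_mul (Matrix.GeneralLinearGroup.det g)
  rw [Matrix.GeneralLinearGroup.val_det_apply, Matrix.det_fin_two] at h
  exact h

lemma gAct_coords (g : GL2 R) (x : V R) :
    gAct g x =
      ![gd g * (ge g 0 0 ^ 3 * x 0 + ge g 0 0 ^ 2 * ge g 0 1 * x 1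
          + ge g 0 0 * ge g 0 1 ^ 2 * x 2 + ge g 0 1 ^ 3 * x 3),
        gd g * (3 * ge g 0 0 ^ 2 * ge g 1 0 * x 0
          + (ge g 0 0 ^ 2 * ge g 1 1 + 2 * ge g 0 0 * ge g 0 1 * ge g 1 0) * x 1
          + (ge g 0 1 ^ 2 * ge g 1 0 + 2 * ge g 0 0 * ge g 0 1 * ge g 1 1) * x 2
          + 3 * ge g 0 1 ^ 2 * ge g 1 1 * x 3),
        gd g * (3 * ge g 0 0 * ge g 1 0 ^ 2 * x 0
          + (ge g 0 1 * ge g 1 0 ^ 2 + 2 * ge g 0 0 * ge g 1 0 * ge g 1 1) * x 1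
          + (ge g 0 0 * ge g 1 1 ^ 2 + 2 * ge g 0 1 * ge g 1 0 * ge g 1 1) * x 2
          + 3 * ge g 0 1 * ge g 1 1 ^ 2 * x 3),
        gd g * (ge g 1 0 ^ 3 * x 0 + ge g 1 0 ^ 2 * ge g 1 1 * x 1
          + ge g 1 0 * ge g 1 1 ^ 2 * x 2 + ge g 1 1 ^ 3 * x 3)] := rfl

lemma vec4_eq_iff (a b : V R) : a = b ↔ (a 0 = b 0 ∧ a 1 = b 1 ∧ a 2 = b 2 ∧ a 3 = b 3) := by
  constructor
  · rintro rfl; exact ⟨rfl, rfl, rfl, rfl⟩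
  · rintro ⟨h0, h1, h2, h3⟩; funext i; fin_cases i <;> assumption


lemma gd_mul (g h : GL2 R) : gd (g * h) = gd g * gd h := by
  unfold gd
  rw [map_mul, mul_inv, Units.val_mul]

lemma ge_mul (g h : GL2 R) (i j : Fin 2) :
    ge (g * h) i j = ge g i 0 * ge h 0 j + ge g i 1 * ge h 1 j := by
  unfold ge
  rw [Units.val_mul, Matrix.mul_apply, Fin.sum_univ_two]

lemma gAct_eq_iff (g : GL2 R) (x y : V R) :
    gAct g x = y ↔
      (gd g * (ge g 0 0 ^ 3 * x 0 + ge g 0 0 ^ 2 * ge g 0 1 * x 1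
          + ge g 0 0 * ge g 0 1 ^ 2 * x 2 + ge g 0 1 ^ 3 * x 3) = y 0 ∧
        gd g * (3 * ge g 0 0 ^ 2 * ge g 1 0 * x 0
          + (ge g 0 0 ^ 2 * ge g 1 1 + 2 * ge g 0 0 * ge g 0 1 * ge g 1 0) * x 1
          + (ge g 0 1 ^ 2 * ge g 1 0 + 2 * ge g 0 0 * ge g 0 1 * ge g 1 1) * x 2
          + 3 * ge g 0 1 ^ 2 * ge g 1 1 * x 3) = y 1 ∧
        gd g * (3 * ge g 0 0 * ge g 1 0 ^ 2 * x 0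
          + (ge g 0 1 * ge g 1 0 ^ 2 + 2 * ge g 0 0 * ge g 1 0 * ge g 1 1) * x 1
          + (ge g 0 0 * ge g 1 1 ^ 2 + 2 * ge g 0 1 * ge g 1 0 * ge g 1 1) * x 2
          + 3 * ge g 0 1 * ge g 1 1 ^ 2 * x 3) = y 2 ∧
        gd g * (ge g 1 0 ^ 3 * x 0 + ge g 1 0 ^ 2 * ge g 1 1 * x 1
          + ge g 1 0 * ge g 1 1 ^ 2 * x 2 + ge g 1 1 ^ 3 * x 3) = y 3) := by
  rw [gAct_coords, vec4_eq_iff]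
  simp only [Matrix.cons_val_zero, Matrix.cons_val_one, Matrix.head_cons,
    Matrix.cons_val_two, Matrix.cons_val_three, Matrix.tail_cons, Matrix.head_fin_const]

lemma gAct_one (x : V R) : gAct (1 : GL2 R) x = x := by
  rw [gAct_eq_iff]
  have hge : ∀ i j : Fin 2, ge (1 : GL2 R) i j = (1 : Matrix (Fin 2) (Fin 2) R) i j := by
    intro i j; rfl
  have hgd : gd (1 : GL2 R) = 1 := by
    unfold gd; rw [map_one, inv_one, Units.val_one]
  refine ⟨?_, ?_, ?_, ?_⟩ <;>
    simp [hge, hgd, Matrix.one_apply] <;> ring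

lemma gAct_mul (g h : GL2 R) (x : V R) : gAct (g * h) x = gAct g (gAct h x) := by
  rw [gAct_eq_iff, gAct_coords h, gAct_coords g]
  refine ⟨?_, ?_, ?_, ?_⟩ <;>
    simp only [gd_mul, ge_mul, Matrix.cons_val_zero, Matrix.cons_val_one, Matrix.head_cons,
      Matrix.cons_val_two, Matrix.cons_val_three, Matrix.tail_cons, Matrix.head_fin_const] <;>
    ring

lemma mem_orbitOf_self (a : V R) : a ∈ orbitOf a := ⟨1, (gAct_one a).symm⟩

lemma orbit_symm {a b : V R} (h : a ∈ orbitOf b) : b ∈ orbitOf a := by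
  obtain ⟨g, rfl⟩ := h
  exact ⟨g⁻¹, by rw [← gAct_mul, inv_mul_cancel, gAct_one]⟩

lemma orbit_trans {a b c : V R} (h1 : a ∈ orbitOf b) (h2 : b ∈ orbitOf c) : a ∈ orbitOf c := by
  obtain ⟨g, rfl⟩ := h1; obtain ⟨h, rfl⟩ := h2
  exact ⟨g * h, (gAct_mul g h c).symm⟩

lemma orbitOf_subset_GOrbit {S : Set (V R)} {a : V R} (h : a ∈ S) : orbitOf a ⊆ GOrbit S := by
  rintro x ⟨g, rfl⟩; exact ⟨g, a, h, rfl⟩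

lemma GOrbit_subset_orbitOf {S : Set (V R)} {b : V R} (h : ∀ a ∈ S, a ∈ orbitOf b) :
    GOrbit S ⊆ orbitOf b := by
  rintro x ⟨g, a, ha, rfl⟩
  exact orbit_trans ⟨g, rfl⟩ (h a ha)

section ModP

variable (p : ℕ) [Fact p.Prime]

instance : NeZero (p ^ 2) := ⟨pow_ne_zero _ (Fact.out : p.Prime).ne_zero⟩

/-- reduction mod `p` -/
def pr : ZMod (p ^ 2) →+* ZMod p := ZMod.castHom (p_dvd_p_sq p) (ZMod p)

variable {p}

/-- lift -/
def lf (v : ZMod p) : ZMod (p ^ 2) := (v.val : ZMod (p ^ 2))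

lemma pr_natCast (k : ℕ) : pr p (k : ZMod (p ^ 2)) = (k : ZMod p) := map_natCast _ k

lemma pr_lf (v : ZMod p) : pr p (lf v) = v := by
  show pr p ((v.val : ℕ) : ZMod (p ^ 2)) = v
  rw [pr_natCast, ZMod.natCast_val, ZMod.cast_id]

lemma pr_p : pr p ((p : ℕ) : ZMod (p ^ 2)) = 0 := by
  rw [pr_natCast, ZMod.natCast_self]

lemma self_eq_val_cast (x : ZMod (p ^ 2)) : x = ((x.val : ℕ) : ZMod (p ^ 2)) := by
  rw [ZMod.natCast_val, ZMod.cast_id]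

lemma pr_eq_zero_iff {x : ZMod (p ^ 2)} : pr p x = 0 ↔ (p : ℤ) ∣ (x.val : ℤ) := by
  conv_lhs => rw [self_eq_val_cast x, pr_natCast]
  rw [← ZMod.intCast_zmod_eq_zero_iff_dvd]
  norm_cast

lemma pmul_eq_zero_iff {x : ZMod (p ^ 2)} : (p : ZMod (p ^ 2)) * x = 0 ↔ pr p x = 0 := by
  have hp : p ≠ 0 := (Fact.out : p.Prime).ne_zero
  rw [pr_eq_zero_iff]
  conv_lhs => rw [self_eq_val_cast x]
  rw [show (p : ZMod (p^2)) * ((x.val : ℕ) : ZMod (p^2)) = ((p * x.val : ℕ) : ZMod (p^2)) by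
    push_cast; ring]
  rw [ZMod.natCast_eq_zero_iff]
  have hpos : 0 < p := Nat.pos_of_ne_zero hp
  generalize x.val = n
  rw [pow_two, Nat.mul_dvd_mul_iff_left hpos]
  norm_cast

lemma pmul_pmul (x y : ZMod (p ^ 2)) : ((p : ZMod (p ^ 2)) * x) * ((p : ZMod (p ^ 2)) * y) = 0 := by
  have h : (p : ZMod (p ^ 2)) * (p : ZMod (p ^ 2)) = 0 := by
    rw [show (p : ZMod (p^2)) * (p : ZMod (p^2)) = ((p^2 : ℕ) : ZMod (p^2)) by push_cast; ring,
      ZMod.natCast_self]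
  calc ((p : ZMod (p ^ 2)) * x) * ((p : ZMod (p ^ 2)) * y)
      = ((p : ZMod (p^2)) * (p : ZMod (p^2))) * (x * y) := by ring
    _ = 0 := by rw [h, zero_mul]

lemma pp_zero : (p : ZMod (p ^ 2)) * (p : ZMod (p ^ 2)) = 0 := by
  have := pmul_pmul (1 : ZMod (p^2)) 1
  simpa using this

lemma pmul_eq_pmul_iff {x y : ZMod (p ^ 2)} :
    (p : ZMod (p ^ 2)) * x = (p : ZMod (p ^ 2)) * y ↔ pr p x = pr p y := by
  rw [← sub_eq_zero, ← mul_sub, pmul_eq_zero_iff, map_sub, sub_eq_zero]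

lemma exists_pmul {x : ZMod (p ^ 2)} (h : pr p x = 0) : ∃ y, x = (p : ZMod (p ^ 2)) * y := by
  rw [pr_eq_zero_iff] at h
  obtain ⟨k, hk⟩ : p ∣ x.val := by exact_mod_cast h
  exact ⟨(k : ZMod (p^2)), by rw [self_eq_val_cast x, hk]; push_cast; ring⟩

lemma isUnit_iff_pr {x : ZMod (p ^ 2)} : IsUnit x ↔ pr p x ≠ 0 := by
  have hp : p.Prime := Fact.out
  conv_lhs => rw [self_eq_val_cast x]
  rw [ZMod.isUnit_iff_coprime, Ne, pr_eq_zero_iff]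
  rw [Nat.coprime_pow_right_iff (by norm_num)]
  rw [Nat.coprime_comm, hp.coprime_iff_not_dvd]
  constructor
  · intro h h2; exact h (by exact_mod_cast h2)
  · intro h h2; exact h (by exact_mod_cast h2)

lemma pr_isUnit {x : ZMod (p ^ 2)} (h : IsUnit x) : pr p x ≠ 0 := isUnit_iff_pr.mp h

lemma isUnit_three (hp3 : p ≠ 3) : IsUnit (3 : ZMod (p ^ 2)) := by
  have hp : p.Prime := Fact.out
  rw [isUnit_iff_pr]
  rw [show ((3 : ZMod (p^2))) = ((3 : ℕ) : ZMod (p^2)) by norm_cast, pr_natCast]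
  rw [Ne, ZMod.natCast_eq_zero_iff]
  intro h
  exact hp3 ((Nat.prime_dvd_prime_iff_eq hp (by norm_num)).mp h)

lemma InPR_iff {x : ZMod (p ^ 2)} : InPR p x ↔ pr p x = 0 := by
  constructor
  · rintro ⟨y, rfl⟩; rw [map_mul, pr_p, zero_mul]
  · intro h; obtain ⟨y, hy⟩ := exists_pmul h; exact ⟨y, hy⟩

end ModP

section Moves

variable {R₀ : Type*} [CommRing R₀]

/-- Build a `GL₂` element from entries. -/
def mkGL (a b c d : R₀) (h : IsUnit (a * d - b * c)) : GL2 R₀ :=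
  ((Matrix.isUnit_iff_isUnit_det _).mpr
    (by rw [Matrix.det_fin_two_of]; exact h) :
      IsUnit (Matrix.of ![![a, b], ![c, d]])).unit

lemma mkGL_coe (a b c d : R₀) (h : IsUnit (a * d - b * c)) :
    ((mkGL a b c d h : GL2 R₀) : Matrix (Fin 2) (Fin 2) R₀) = Matrix.of ![![a, b], ![c, d]] :=
  IsUnit.unit_spec _

lemma ge_mk00 (a b c d : R₀) (h : IsUnit (a * d - b * c)) : ge (mkGL a b c d h) 0 0 = a := by
  rw [ge, mkGL_coe]; simp
lemma ge_mk01 (a b c d : R₀) (h : IsUnit (a * d - b * c)) : ge (mkGL a b c d h) 0 1 = b := by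
  rw [ge, mkGL_coe]; simp
lemma ge_mk10 (a b c d : R₀) (h : IsUnit (a * d - b * c)) : ge (mkGL a b c d h) 1 0 = c := by
  rw [ge, mkGL_coe]; simp
lemma ge_mk11 (a b c d : R₀) (h : IsUnit (a * d - b * c)) : ge (mkGL a b c d h) 1 1 = d := by
  rw [ge, mkGL_coe]; simp

lemma d_spec_mk (a b c d : R₀) (h : IsUnit (a * d - b * c)) :
    gd (mkGL a b c d h) * (a * d - b * c) = 1 := by
  have := d_spec (mkGL a b c d h)
  rwa [ge_mk00, ge_mk01, ge_mk10, ge_mk11] at this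

end Moves

section PartI

variable {p : ℕ} [Fact p.Prime]

lemma D13ss_sub_orbit (hp3 : p ≠ 3) :
    ∀ a ∈ D13ss p, a ∈ orbitOf (![1, 0, 0, 0] : V (ZMod (p ^ 2))) := by
  rintro a ⟨ha0, ⟨y, hy⟩, h2, h3⟩
  have h3i : (3 : ZMod (p ^ 2)) * 3⁻¹ = 1 := ZMod.mul_inv_of_unit _ (isUnit_three hp3)
  have h0i : a 0 * (a 0)⁻¹ = 1 := ZMod.mul_inv_of_unit _ ha0
  have hpp : (p : ZMod (p ^ 2)) * (p : ZMod (p ^ 2)) = 0 := pp_zero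
  have hinv : IsUnit ((1 : ZMod (p ^ 2)) * (a 0)⁻¹
      - 0 * ((p : ZMod (p ^ 2)) * (3⁻¹ * (a 0)⁻¹ * y))) := by
    rw [one_mul, zero_mul, sub_zero]
    exact IsUnit.of_mul_eq_one _ (by rw [mul_comm]; exact h0i)
  set g := mkGL (1 : ZMod (p ^ 2)) 0 ((p : ZMod (p ^ 2)) * (3⁻¹ * (a 0)⁻¹ * y)) ((a 0)⁻¹) hinv
    with hg
  refine ⟨g, ?_⟩
  have hd := d_spec_mk (1 : ZMod (p ^ 2)) 0 ((p : ZMod (p ^ 2)) * (3⁻¹ * (a 0)⁻¹ * y)) ((a 0)⁻¹)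
    hinv
  symm
  rw [gAct_eq_iff]
  simp only [hg, ge_mk00, ge_mk01, ge_mk10, ge_mk11, Matrix.cons_val_zero, Matrix.cons_val_one,
    Matrix.head_cons, Matrix.cons_val_two, Matrix.cons_val_three, Matrix.tail_cons,
    Matrix.head_fin_const]
  rw [← hg]
  refine ⟨?_, ?_, ?_, ?_⟩
  · linear_combination (a 0) * hd - gd g * h0i
  · rw [hy]
    linear_combination (p * y * gd g * (a 0)⁻¹) * h3i + (p * y) * hd
  · rw [h2]
    linear_combination (3 * gd g * (3⁻¹ * (a 0)⁻¹ * y) * (3⁻¹ * (a 0)⁻¹ * y)) * hpp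
  · rw [h3]
    linear_combination (gd g * (3⁻¹ * (a 0)⁻¹ * y) ^ 3 * (p : ZMod (p ^ 2))) * hpp

lemma part_i (hp3 : p ≠ 3) :
    V13ss p = orbitOf (![1, 0, 0, 0] : V (ZMod (p ^ 2))) := by
  apply Set.Subset.antisymm
  · exact GOrbit_subset_orbitOf (D13ss_sub_orbit hp3)
  · apply orbitOf_subset_GOrbit
    exact ⟨by simp, ⟨0, by simp⟩, by simp, by simp⟩
end PartI

section NormalForms

variable {p : ℕ} [Fact p.Prime]

local notation "R2" => ZMod (p ^ 2)
local notation "P" => ((p : ℕ) : ZMod (p ^ 2))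

/-- normal form representatives for `V13max` -/
def av (v : ZMod p) : V (ZMod (p ^ 2)) := ![1, 0, 0, ((p : ℕ) : ZMod (p ^ 2)) * lf v]

/-- normal form representatives for `V13s` -/
def bv (v : ZMod p) : V (ZMod (p ^ 2)) := ![1, 0, ((p : ℕ) : ZMod (p ^ 2)) * lf v, 0]

lemma pr_add_pmul (x z : R2) : pr p (x + P * z) = pr p x := by
  rw [map_add, map_mul, pr_p, zero_mul, add_zero]

lemma N2a (hp3 : p ≠ 3) :
    ∀ a ∈ D13max p, ∃ v : ZMod p, v ≠ 0 ∧ a ∈ orbitOf (av v) := by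
  rintro a ⟨ha0, ⟨b1, hb1⟩, ⟨b2, hb2⟩, ⟨⟨b3, hb3⟩, ha3ne⟩⟩
  have h3i : (3 : R2) * 3⁻¹ = 1 := ZMod.mul_inv_of_unit _ (isUnit_three hp3)
  have hpp : P * P = 0 := pp_zero
  have hb3u : IsUnit b3 := by
    rw [isUnit_iff_pr]
    intro h
    exact ha3ne (by rw [hb3, pmul_eq_zero_iff.mpr h])
  have hb3i : b3 * b3⁻¹ = 1 := ZMod.mul_inv_of_unit _ hb3u
  -- step 1 : clear the third coefficient
  set β : R2 := -(3⁻¹ * b2 * b3⁻¹) with hβ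
  have hdet1 : IsUnit ((1 : R2) * 1 - β * 0) := by simpa using isUnit_one
  have hd1 := d_spec_mk (1 : R2) β 0 1 hdet1
  have hgd1 : gd (mkGL (1 : R2) β 0 1 hdet1) = 1 := by linear_combination hd1
  set a0' : R2 := a 0 + P * (β * b1 + β ^ 2 * b2 + β ^ 3 * b3) with ha0'
  set b1' : R2 := b1 + 2 * β * b2 + 3 * β ^ 2 * b3 with hb1'
  have h1 : gAct (mkGL (1 : R2) β 0 1 hdet1) a = ![a0', P * b1', 0, P * b3] := by
    rw [gAct_eq_iff]
    simp only [ge_mk00, ge_mk01, ge_mk10, ge_mk11, Matrix.cons_val_zero, Matrix.cons_val_one,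
      Matrix.head_cons, Matrix.cons_val_two, Matrix.cons_val_three, Matrix.tail_cons,
      Matrix.head_fin_const]
    rw [hgd1, hb1, hb2, hb3]
    refine ⟨by ring, by ring, ?_, by ring⟩
    · linear_combination (-(P * b2 * b3 * b3⁻¹)) * h3i + (-(P * b2)) * hb3i
  -- step 2 : clear the second coefficient
  have hu0' : IsUnit a0' := by
    rw [isUnit_iff_pr, ha0', pr_add_pmul]
    exact pr_isUnit ha0
  have h0'i : a0' * a0'⁻¹ = 1 := ZMod.mul_inv_of_unit _ hu0'
  set s : R2 := -(3⁻¹ * b1' * a0'⁻¹) with hs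
  have hdet2 : IsUnit ((1 : R2) * 1 - 0 * (P * s)) := by simpa using isUnit_one
  have hd2 := d_spec_mk (1 : R2) 0 (P * s) 1 hdet2
  have hgd2 : gd (mkGL (1 : R2) 0 (P * s) 1 hdet2) = 1 := by linear_combination hd2
  have h2 : gAct (mkGL (1 : R2) 0 (P * s) 1 hdet2) (![a0', P * b1', 0, P * b3])
      = ![a0', 0, 0, P * b3] := by
    rw [gAct_eq_iff]
    simp only [ge_mk00, ge_mk01, ge_mk10, ge_mk11, Matrix.cons_val_zero, Matrix.cons_val_one,
      Matrix.head_cons, Matrix.cons_val_two, Matrix.cons_val_three, Matrix.tail_cons,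
      Matrix.head_fin_const]
    rw [hgd2]
    refine ⟨by ring, ?_, ?_, ?_⟩
    · rw [hs]
      linear_combination (-(P * b1' * a0' * a0'⁻¹)) * h3i + (-(P * b1')) * h0'i
    · linear_combination (3 * s * s * a0' + 2 * s * b1') * hpp
    · linear_combination (s ^ 3 * P * a0' + s ^ 2 * P * b1') * hpp
  -- step 3 : rescale
  have hdet3 : IsUnit ((1 : R2) * a0' - 0 * 0) := by simpa using hu0'
  have hd3 := d_spec_mk (1 : R2) 0 0 a0' hdet3
  have h3 : gAct (mkGL (1 : R2) 0 0 a0' hdet3) (![a0', 0, 0, P * b3])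
      = ![1, 0, 0, P * (a0' ^ 2 * b3)] := by
    rw [gAct_eq_iff]
    simp only [ge_mk00, ge_mk01, ge_mk10, ge_mk11, Matrix.cons_val_zero, Matrix.cons_val_one,
      Matrix.head_cons, Matrix.cons_val_two, Matrix.cons_val_three, Matrix.tail_cons,
      Matrix.head_fin_const]
    refine ⟨by linear_combination hd3, by ring, by ring, ?_⟩
    · linear_combination (a0' ^ 2 * P * b3) * hd3
  refine ⟨pr p (a0' ^ 2 * b3), ?_, ?_⟩
  · have h1' : pr p a0' ≠ 0 := pr_isUnit hu0'
    have h2' : pr p b3 ≠ 0 := pr_isUnit hb3u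
    rw [map_mul, map_pow]
    exact mul_ne_zero (pow_ne_zero _ h1') h2'
  · have hc : P * lf (pr p (a0' ^ 2 * b3)) = P * (a0' ^ 2 * b3) :=
      pmul_eq_pmul_iff.mpr (pr_lf _)
    rw [av, hc]
    apply orbit_symm
    refine ⟨mkGL (1 : R2) 0 0 a0' hdet3 * (mkGL (1 : R2) 0 (P * s) 1 hdet2
      * mkGL (1 : R2) β 0 1 hdet1), ?_⟩
    rw [gAct_mul, gAct_mul, h1, h2, h3]

end NormalForms

section Invariants13max

variable {p : ℕ} [Fact p.Prime]

local notation "R2" => ZMod (p ^ 2)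
local notation "P" => ((p : ℕ) : ZMod (p ^ 2))

lemma pr_Pmul (z : R2) : pr p (P * z) = 0 := by rw [map_mul, pr_p, zero_mul]

lemma three_bar_ne (hp3 : p ≠ 3) : (3 : ZMod p) ≠ 0 := by
  have hp : p.Prime := Fact.out
  rw [show ((3 : ZMod p)) = ((3 : ℕ) : ZMod p) by norm_cast, Ne,
    ZMod.natCast_eq_zero_iff]
  intro h
  exact hp3 ((Nat.prime_dvd_prime_iff_eq hp (by norm_num)).mp h)

lemma N2b {v w : ZMod p} (hw : w ≠ 0) {t : ZMod p} (ht : w = t ^ 3 * v) :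
    av w ∈ orbitOf (av (p := p) v) := by
  have ht0 : t ≠ 0 := by rintro rfl; simp at ht; exact hw ht
  have hdet : IsUnit ((lf t : R2) * lf t ^ 2 - 0 * 0) := by
    rw [isUnit_iff_pr]
    have : pr p ((lf t : R2) * lf t ^ 2 - 0 * 0) = t ^ 3 := by
      rw [map_sub, map_mul, map_pow, pr_lf]; ring_nf; simp
    rw [this]
    exact pow_ne_zero _ ht0
  have hd := d_spec_mk (lf t : R2) 0 0 (lf t ^ 2) hdet
  have key : P * ((lf t : R2) ^ 3 * lf v) = P * lf w :=
    pmul_eq_pmul_iff.mpr (by rw [map_mul, map_pow, pr_lf, pr_lf, pr_lf, ht])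
  refine ⟨mkGL (lf t : R2) 0 0 (lf t ^ 2) hdet, ?_⟩
  symm
  rw [av, av, gAct_eq_iff]
  simp only [ge_mk00, ge_mk01, ge_mk10, ge_mk11, Matrix.cons_val_zero, Matrix.cons_val_one,
    Matrix.head_cons, Matrix.cons_val_two, Matrix.cons_val_three, Matrix.tail_cons,
    Matrix.head_fin_const]
  refine ⟨by linear_combination hd, by ring, by ring, ?_⟩
  · linear_combination ((lf t : R2) ^ 3 * P * lf v) * hd
      + key

lemma N2c (hp3 : p ≠ 3) {v w : ZMod p} (hv : v ≠ 0) (g : GL2 R2)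
    (h : gAct g (av v) = av w) : ∃ t : ZMod p, t ≠ 0 ∧ w = t ^ 3 * v := by
  have hpp : P * P = 0 := pp_zero
  set α := ge g 0 0 with hα
  set β := ge g 0 1 with hβ
  set γ := ge g 1 0 with hγ
  set δ := ge g 1 1 with hδ
  have hd : gd g * (α * δ - β * γ) = 1 := d_spec g
  rw [av, av, gAct_eq_iff] at h
  simp only [Matrix.cons_val_zero, Matrix.cons_val_one, Matrix.head_cons, Matrix.cons_val_two,
    Matrix.cons_val_three, Matrix.tail_cons, Matrix.head_fin_const] at h
  obtain ⟨E1, E2, E3, E4⟩ := h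
  have h3 := three_bar_ne (p := p) hp3
  -- unscaled equations
  have F1 : α ^ 3 + β ^ 3 * (P * lf v) = (α * δ - β * γ) * 1 := by
    linear_combination (α * δ - β * γ) * E1
      - (α ^ 3 * 1 + α ^ 2 * β * 0 + α * β ^ 2 * 0 + β ^ 3 * (P * lf v)) * hd
  have F2 : 3 * α ^ 2 * γ + 3 * β ^ 2 * δ * (P * lf v) = 0 := by
    linear_combination (α * δ - β * γ) * E2 - (3 * α ^ 2 * γ * 1
      + (α ^ 2 * δ + 2 * α * β * γ) * 0
      + (β ^ 2 * γ + 2 * α * β * δ) * 0 + 3 * β ^ 2 * δ * (P * lf v)) * hd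
  have F3 : 3 * α * γ ^ 2 + 3 * β * δ ^ 2 * (P * lf v) = 0 := by
    linear_combination (α * δ - β * γ) * E3 - (3 * α * γ ^ 2 * 1
      + (β * γ ^ 2 + 2 * α * γ * δ) * 0
      + (α * δ ^ 2 + 2 * β * γ * δ) * 0 + 3 * β * δ ^ 2 * (P * lf v)) * hd
  have F4 : γ ^ 3 + δ ^ 3 * (P * lf v) = (α * δ - β * γ) * (P * lf w) := by
    linear_combination (α * δ - β * γ) * E4 - (γ ^ 3 * 1 + γ ^ 2 * δ * 0 + γ * δ ^ 2 * 0
      + δ ^ 3 * (P * lf v)) * hd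
  -- mod p analysis
  have heu : IsUnit (α * δ - β * γ) :=
    IsUnit.of_mul_eq_one _ (by rw [mul_comm] at hd; exact hd)
  have hEbar : pr p (α * δ - β * γ) ≠ 0 := pr_isUnit heu
  have hCzero : pr p γ = 0 := by
    have h4 : pr p γ ^ 3 = 0 := by
      simpa [map_add, map_mul, map_pow, map_sub, map_one, map_zero, pr_p, mul_zero, zero_mul,
        mul_one, add_zero] using congrArg (pr p) F4
    exact pow_eq_zero_iff (n := 3) (by norm_num) |>.mp h4
  have hAE : pr p α ^ 3 = pr p (α * δ - β * γ) := by
    simpa [map_add, map_mul, map_pow, map_one, map_zero, pr_p, mul_zero, zero_mul, mul_one,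
      add_zero] using congrArg (pr p) F1
  have hAbar : pr p α ≠ 0 := by
    intro h0
    exact hEbar (by rw [← hAE, h0]; ring)
  have hDbar : pr p δ ≠ 0 := by
    intro h0
    apply hEbar
    rw [map_sub, map_mul, map_mul, h0, hCzero, mul_zero, mul_zero, sub_zero]
  obtain ⟨c, hc⟩ := exists_pmul hCzero
  -- β ≡ 0 mod p
  have hBzero : pr p β = 0 := by
    have F3' : P * (3 * β * δ ^ 2 * lf v) = 0 := by
      rw [hc] at F3
      linear_combination F3 - (3 * α * c ^ 2) * hpp
    have hthis := pmul_eq_zero_iff.mp F3'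
    simp only [map_mul, map_pow, map_ofNat, pr_lf] at hthis
    by_contra hβne
    exact (mul_ne_zero (mul_ne_zero (mul_ne_zero h3 hβne) (pow_ne_zero _ hDbar)) hv) hthis
  obtain ⟨b, hb⟩ := exists_pmul hBzero
  -- γ = 0
  have hγ0 : γ = 0 := by
    have F2' : P * (3 * α ^ 2 * c) = 0 := by
      rw [hc, hb] at F2
      linear_combination F2 - (3 * b ^ 2 * δ * P * lf v) * hpp
    have h0 := pmul_eq_zero_iff.mp F2'
    simp only [map_mul, map_pow, map_ofNat] at h0
    have hcbar : pr p c = 0 := by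
      by_contra hcne
      exact (mul_ne_zero (mul_ne_zero h3 (pow_ne_zero _ hAbar)) hcne) h0
    rw [hc]
    exact pmul_eq_zero_iff.mpr hcbar
  -- exact relations
  have G1 : α ^ 3 = α * δ := by
    rw [hb, hγ0] at F1
    linear_combination F1 - (P * P * b ^ 3 * lf v) * hpp
  have G4 : P * (δ ^ 3 * lf v) = P * (α * δ * lf w) := by
    rw [hγ0] at F4
    linear_combination F4
  have hkey := pmul_eq_pmul_iff.mp G4
  simp only [map_mul, map_pow, pr_lf] at hkey
  have hAD : pr p α ^ 3 = pr p α * pr p δ := by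
    simpa [map_mul, map_pow] using congrArg (pr p) G1
  set A := pr p α with hA
  set D := pr p δ with hD
  have hDA2 : D = A ^ 2 := by
    have hq : A * D = A * A ^ 2 := by linear_combination -hAD
    exact mul_left_cancel₀ hAbar hq
  refine ⟨A, hAbar, ?_⟩
  have hA3 : A ^ 3 ≠ 0 := pow_ne_zero _ hAbar
  have hq2 : A ^ 3 * w = A ^ 3 * (A ^ 3 * v) := by
    rw [hDA2] at hkey
    linear_combination -hkey
  exact mul_left_cancel₀ hA3 hq2

end Invariants13max

section Invariants13s

variable {p : ℕ} [Fact p.Prime]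

local notation "R2" => ZMod (p ^ 2)
local notation "P" => ((p : ℕ) : ZMod (p ^ 2))

lemma N3a (hp3 : p ≠ 3) :
    ∀ a ∈ D13s p, ∃ v : ZMod p, v ≠ 0 ∧ a ∈ orbitOf (bv v) := by
  rintro a ⟨ha0, ⟨b1, hb1⟩, ⟨⟨b2, hb2⟩, ha2ne⟩, ha3⟩
  have h3i : (3 : R2) * 3⁻¹ = 1 := ZMod.mul_inv_of_unit _ (isUnit_three hp3)
  have h0i : a 0 * (a 0)⁻¹ = 1 := ZMod.mul_inv_of_unit _ ha0
  have hpp : P * P = 0 := pp_zero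
  have hb2u : IsUnit b2 := by
    rw [isUnit_iff_pr]
    intro h
    exact ha2ne (by rw [hb2, pmul_eq_zero_iff.mpr h])
  set s : R2 := -(3⁻¹ * b1 * (a 0)⁻¹) with hs
  have hdet1 : IsUnit ((1 : R2) * 1 - 0 * (P * s)) := by simpa using isUnit_one
  have hd1 := d_spec_mk (1 : R2) 0 (P * s) 1 hdet1
  have hgd1 : gd (mkGL (1 : R2) 0 (P * s) 1 hdet1) = 1 := by linear_combination hd1
  have h1 : gAct (mkGL (1 : R2) 0 (P * s) 1 hdet1) a = ![a 0, 0, P * b2, 0] := by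
    rw [gAct_eq_iff]
    simp only [ge_mk00, ge_mk01, ge_mk10, ge_mk11, Matrix.cons_val_zero, Matrix.cons_val_one,
      Matrix.head_cons, Matrix.cons_val_two, Matrix.cons_val_three, Matrix.tail_cons,
      Matrix.head_fin_const]
    rw [hgd1, hb1, hb2, ha3]
    refine ⟨by ring, ?_, ?_, ?_⟩
    · rw [hs]
      linear_combination (-(P * b1 * (a 0) * (a 0)⁻¹)) * h3i + (-(P * b1)) * h0i
    · linear_combination (3 * s * s * (a 0) + 2 * s * b1) * hpp
    · linear_combination (s ^ 3 * P * (a 0) + s ^ 2 * P * b1 + s * b2) * hpp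
  have hdet2 : IsUnit ((1 : R2) * (a 0) - 0 * 0) := by simpa using ha0
  have hd2 := d_spec_mk (1 : R2) 0 0 (a 0) hdet2
  have h2 : gAct (mkGL (1 : R2) 0 0 (a 0) hdet2) (![a 0, 0, P * b2, 0])
      = ![1, 0, P * (a 0 * b2), 0] := by
    rw [gAct_eq_iff]
    simp only [ge_mk00, ge_mk01, ge_mk10, ge_mk11, Matrix.cons_val_zero, Matrix.cons_val_one,
      Matrix.head_cons, Matrix.cons_val_two, Matrix.cons_val_three, Matrix.tail_cons,
      Matrix.head_fin_const]
    refine ⟨by linear_combination hd2, by ring, ?_, by ring⟩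
    · linear_combination ((a 0) * P * b2) * hd2
  refine ⟨pr p (a 0 * b2), ?_, ?_⟩
  · rw [map_mul]
    exact mul_ne_zero (pr_isUnit ha0) (pr_isUnit hb2u)
  · have hc : P * lf (pr p (a 0 * b2)) = P * (a 0 * b2) :=
      pmul_eq_pmul_iff.mpr (pr_lf _)
    rw [bv, hc]
    apply orbit_symm
    refine ⟨mkGL (1 : R2) 0 0 (a 0) hdet2 * mkGL (1 : R2) 0 (P * s) 1 hdet1, ?_⟩
    rw [gAct_mul, h1, h2]

lemma N3b {v w : ZMod p} (hw : w ≠ 0) {t : ZMod p} (ht : w = t ^ 2 * v) :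
    bv w ∈ orbitOf (bv (p := p) v) := by
  have ht0 : t ≠ 0 := by rintro rfl; simp at ht; exact hw ht
  have hdet : IsUnit ((lf t : R2) * lf t ^ 2 - 0 * 0) := by
    rw [isUnit_iff_pr]
    have hq : pr p ((lf t : R2) * lf t ^ 2 - 0 * 0) = t ^ 3 := by
      rw [map_sub, map_mul, map_pow, pr_lf]; ring_nf; simp
    rw [hq]
    exact pow_ne_zero _ ht0
  have hd := d_spec_mk (lf t : R2) 0 0 (lf t ^ 2) hdet
  have key : P * ((lf t : R2) ^ 2 * lf v) = P * lf w :=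
    pmul_eq_pmul_iff.mpr (by rw [map_mul, map_pow, pr_lf, pr_lf, pr_lf, ht])
  refine ⟨mkGL (lf t : R2) 0 0 (lf t ^ 2) hdet, ?_⟩
  symm
  rw [bv, bv, gAct_eq_iff]
  simp only [ge_mk00, ge_mk01, ge_mk10, ge_mk11, Matrix.cons_val_zero, Matrix.cons_val_one,
    Matrix.head_cons, Matrix.cons_val_two, Matrix.cons_val_three, Matrix.tail_cons,
    Matrix.head_fin_const]
  refine ⟨by linear_combination hd, by ring, ?_, by ring⟩
  · linear_combination ((lf t : R2) ^ 2 * P * lf v) * hd + key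

lemma N3c (hp3 : p ≠ 3) {v w : ZMod p} (hv : v ≠ 0) (g : GL2 R2)
    (h : gAct g (bv v) = bv w) : ∃ t : ZMod p, t ≠ 0 ∧ w = t ^ 2 * v := by
  have hpp : P * P = 0 := pp_zero
  set α := ge g 0 0 with hα
  set β := ge g 0 1 with hβ
  set γ := ge g 1 0 with hγ
  set δ := ge g 1 1 with hδ
  have hd : gd g * (α * δ - β * γ) = 1 := d_spec g
  rw [bv, bv, gAct_eq_iff] at h
  simp only [Matrix.cons_val_zero, Matrix.cons_val_one, Matrix.head_cons, Matrix.cons_val_two,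
    Matrix.cons_val_three, Matrix.tail_cons, Matrix.head_fin_const] at h
  obtain ⟨E1, E2, E3, E4⟩ := h
  have F1 : α ^ 3 + α * β ^ 2 * (P * lf v) = (α * δ - β * γ) * 1 := by
    linear_combination (α * δ - β * γ) * E1 - (α ^ 3 * 1 + α ^ 2 * β * 0
      + α * β ^ 2 * (P * lf v) + β ^ 3 * 0) * hd
  have F3 : 3 * α * γ ^ 2 + (α * δ ^ 2 + 2 * β * γ * δ) * (P * lf v)
      = (α * δ - β * γ) * (P * lf w) := by
    linear_combination (α * δ - β * γ) * E3 - (3 * α * γ ^ 2 * 1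
      + (β * γ ^ 2 + 2 * α * γ * δ) * 0
      + (α * δ ^ 2 + 2 * β * γ * δ) * (P * lf v) + 3 * β * δ ^ 2 * 0) * hd
  have F4 : γ ^ 3 + γ * δ ^ 2 * (P * lf v) = 0 := by
    linear_combination (α * δ - β * γ) * E4 - (γ ^ 3 * 1 + γ ^ 2 * δ * 0
      + γ * δ ^ 2 * (P * lf v) + δ ^ 3 * 0) * hd
  have heu : IsUnit (α * δ - β * γ) :=
    IsUnit.of_mul_eq_one _ (by rw [mul_comm] at hd; exact hd)
  have hEbar : pr p (α * δ - β * γ) ≠ 0 := pr_isUnit heu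
  have hCzero : pr p γ = 0 := by
    have h4 : pr p γ ^ 3 = 0 := by
      simpa [map_add, map_mul, map_pow, map_zero, pr_p, mul_zero, zero_mul,
        add_zero] using congrArg (pr p) F4
    exact pow_eq_zero_iff (n := 3) (by norm_num) |>.mp h4
  have hAE : pr p α ^ 3 = pr p (α * δ - β * γ) := by
    simpa [map_add, map_mul, map_pow, map_one, map_zero, pr_p, mul_zero, zero_mul, mul_one,
      add_zero] using congrArg (pr p) F1
  have hAbar : pr p α ≠ 0 := by
    intro h0
    exact hEbar (by rw [← hAE, h0]; ring)
  have hDbar : pr p δ ≠ 0 := by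
    intro h0
    apply hEbar
    rw [map_sub, map_mul, map_mul, h0, hCzero, mul_zero, mul_zero, sub_zero]
  obtain ⟨c, hc⟩ := exists_pmul hCzero
  have G3 : P * (α * δ ^ 2 * lf v) = P * (α * δ * lf w) := by
    rw [hc] at F3
    linear_combination F3 - (3 * α * c ^ 2 + 2 * β * c * δ * lf v + β * c * lf w) * hpp
  have hkey := pmul_eq_pmul_iff.mp G3
  simp only [map_mul, map_pow, pr_lf] at hkey
  have hAD : pr p α ^ 3 = pr p α * pr p δ := by
    have G1 : pr p α ^ 3 = pr p α * pr p δ - pr p β * (pr p P * pr p c) := by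
      rw [hc] at F1
      simpa [map_add, map_mul, map_pow, map_one, map_zero, pr_p, mul_zero, zero_mul, mul_one,
        add_zero, map_sub] using congrArg (pr p) F1
    rw [G1, pr_p]; ring
  set A := pr p α with hA
  set D := pr p δ with hD
  have hDA2 : D = A ^ 2 := by
    have hq : A * D = A * A ^ 2 := by linear_combination -hAD
    exact mul_left_cancel₀ hAbar hq
  refine ⟨A, hAbar, ?_⟩
  have hAD2 : A * D ≠ 0 := mul_ne_zero hAbar hDbar
  have hq2 : (A * D) * w = (A * D) * (A ^ 2 * v) := by
    rw [hDA2] at hkey ⊢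
    linear_combination -hkey
  exact mul_left_cancel₀ hAD2 hq2

end Invariants13s

section Stab13max

variable {p : ℕ} [Fact p.Prime]

local notation "R2" => ZMod (p ^ 2)
local notation "P" => ((p : ℕ) : ZMod (p ^ 2))

lemma S3fwd (hp3 : p ≠ 3) {v : ZMod p} (hv : v ≠ 0) (g : GL2 R2)
    (h : gAct g (av v) = av v) :
    ge g 1 0 = 0 ∧ pr p (ge g 0 1) = 0 ∧ ge g 1 1 = ge g 0 0 ^ 2 ∧
      P * (ge g 0 0 ^ 3 - 1) = 0 := by
  obtain ⟨t, ht0, htv⟩ := N2c hp3 hv g h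
  have hpp : P * P = 0 := pp_zero
  set α := ge g 0 0 with hα
  set β := ge g 0 1 with hβ
  set γ := ge g 1 0 with hγ
  set δ := ge g 1 1 with hδ
  have hd : gd g * (α * δ - β * γ) = 1 := d_spec g
  rw [av, gAct_eq_iff] at h
  simp only [Matrix.cons_val_zero, Matrix.cons_val_one, Matrix.head_cons, Matrix.cons_val_two,
    Matrix.cons_val_three, Matrix.tail_cons, Matrix.head_fin_const] at h
  obtain ⟨E1, E2, E3, E4⟩ := h
  have h3 := three_bar_ne (p := p) hp3
  have F1 : α ^ 3 + β ^ 3 * (P * lf v) = (α * δ - β * γ) * 1 := by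
    linear_combination (α * δ - β * γ) * E1
      - (α ^ 3 * 1 + α ^ 2 * β * 0 + α * β ^ 2 * 0 + β ^ 3 * (P * lf v)) * hd
  have F2 : 3 * α ^ 2 * γ + 3 * β ^ 2 * δ * (P * lf v) = 0 := by
    linear_combination (α * δ - β * γ) * E2 - (3 * α ^ 2 * γ * 1
      + (α ^ 2 * δ + 2 * α * β * γ) * 0
      + (β ^ 2 * γ + 2 * α * β * δ) * 0 + 3 * β ^ 2 * δ * (P * lf v)) * hd
  have F3 : 3 * α * γ ^ 2 + 3 * β * δ ^ 2 * (P * lf v) = 0 := by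
    linear_combination (α * δ - β * γ) * E3 - (3 * α * γ ^ 2 * 1
      + (β * γ ^ 2 + 2 * α * γ * δ) * 0
      + (α * δ ^ 2 + 2 * β * γ * δ) * 0 + 3 * β * δ ^ 2 * (P * lf v)) * hd
  have F4 : γ ^ 3 + δ ^ 3 * (P * lf v) = (α * δ - β * γ) * (P * lf v) := by
    linear_combination (α * δ - β * γ) * E4 - (γ ^ 3 * 1 + γ ^ 2 * δ * 0 + γ * δ ^ 2 * 0
      + δ ^ 3 * (P * lf v)) * hd
  have heu : IsUnit (α * δ - β * γ) :=
    IsUnit.of_mul_eq_one _ (by rw [mul_comm] at hd; exact hd)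
  have hEbar : pr p (α * δ - β * γ) ≠ 0 := pr_isUnit heu
  have hCzero : pr p γ = 0 := by
    have h4 : pr p γ ^ 3 = 0 := by
      simpa [map_add, map_mul, map_pow, map_sub, map_one, map_zero, pr_p, mul_zero, zero_mul,
        mul_one, add_zero] using congrArg (pr p) F4
    exact pow_eq_zero_iff (n := 3) (by norm_num) |>.mp h4
  have hAE : pr p α ^ 3 = pr p (α * δ - β * γ) := by
    simpa [map_add, map_mul, map_pow, map_one, map_zero, pr_p, mul_zero, zero_mul, mul_one,
      add_zero] using congrArg (pr p) F1
  have hAbar : pr p α ≠ 0 := by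
    intro h0
    exact hEbar (by rw [← hAE, h0]; ring)
  have hDbar : pr p δ ≠ 0 := by
    intro h0
    apply hEbar
    rw [map_sub, map_mul, map_mul, h0, hCzero, mul_zero, mul_zero, sub_zero]
  obtain ⟨c, hc⟩ := exists_pmul hCzero
  have hBzero : pr p β = 0 := by
    have F3' : P * (3 * β * δ ^ 2 * lf v) = 0 := by
      rw [hc] at F3
      linear_combination F3 - (3 * α * c ^ 2) * hpp
    have hthis := pmul_eq_zero_iff.mp F3'
    simp only [map_mul, map_pow, map_ofNat, pr_lf] at hthis
    by_contra hβne
    exact (mul_ne_zero (mul_ne_zero (mul_ne_zero h3 hβne) (pow_ne_zero _ hDbar)) hv) hthis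
  obtain ⟨b, hb⟩ := exists_pmul hBzero
  have hγ0 : γ = 0 := by
    have F2' : P * (3 * α ^ 2 * c) = 0 := by
      rw [hc, hb] at F2
      linear_combination F2 - (3 * b ^ 2 * δ * P * lf v) * hpp
    have h0 := pmul_eq_zero_iff.mp F2'
    simp only [map_mul, map_pow, map_ofNat] at h0
    have hcbar : pr p c = 0 := by
      by_contra hcne
      exact (mul_ne_zero (mul_ne_zero h3 (pow_ne_zero _ hAbar)) hcne) h0
    rw [hc]
    exact pmul_eq_zero_iff.mpr hcbar
  have G1 : α ^ 3 = α * δ := by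
    rw [hb, hγ0] at F1
    linear_combination F1 - (P * P * b ^ 3 * lf v) * hpp
  have hAu : IsUnit α := isUnit_iff_pr.mpr hAbar
  have hδa : δ = α ^ 2 := by
    refine hAu.mul_left_cancel ?_
    linear_combination -G1
  refine ⟨hγ0, hBzero, hδa, ?_⟩
  -- last : α³ ≡ 1 mod p
  have G4 : P * (δ ^ 3 * lf v) = P * (α * δ * lf v) := by
    rw [hγ0] at F4
    linear_combination F4
  have hkey := pmul_eq_pmul_iff.mp G4
  simp only [map_mul, map_pow, pr_lf] at hkey
  rw [pmul_eq_zero_iff]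
  have hA3 : pr p α ^ 3 = 1 := by
    have hδb : pr p δ = pr p α ^ 2 := by rw [hδa, map_pow]
    rw [hδb] at hkey
    -- (A²)³ v = A·A²·v  ⇒  A³ = 1
    have hAne : pr p α ^ 3 * v ≠ 0 := mul_ne_zero (pow_ne_zero _ hAbar) hv
    have hq : (pr p α ^ 3 * v) * (pr p α ^ 3) = (pr p α ^ 3 * v) * 1 := by
      linear_combination hkey
    exact mul_left_cancel₀ hAne hq
  rw [map_sub, map_pow, map_one, hA3, sub_self]

lemma S3bwd {v : ZMod p} (g : GL2 R2)
    (hγ0 : ge g 1 0 = 0) (hB : pr p (ge g 0 1) = 0) (hδa : ge g 1 1 = ge g 0 0 ^ 2)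
    (hA3 : P * (ge g 0 0 ^ 3 - 1) = 0) :
    gAct g (av v) = av v := by
  have hpp : P * P = 0 := pp_zero
  obtain ⟨b, hb⟩ := exists_pmul hB
  have hd : gd g * (ge g 0 0 * ge g 1 1 - ge g 0 1 * ge g 1 0) = 1 := d_spec g
  rw [hγ0, hδa, hb] at hd
  rw [av, gAct_eq_iff]
  simp only [Matrix.cons_val_zero, Matrix.cons_val_one, Matrix.head_cons, Matrix.cons_val_two,
    Matrix.cons_val_three, Matrix.tail_cons, Matrix.head_fin_const]
  rw [hγ0, hδa, hb]
  refine ⟨?_, ?_, ?_, ?_⟩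
  · linear_combination hd + (gd g * P * P * b ^ 3 * lf v) * hpp
  · linear_combination (3 * gd g * b ^ 2 * ge g 0 0 ^ 2 * P * lf v) * hpp
  · linear_combination (3 * gd g * b * ge g 0 0 ^ 4 * lf v) * hpp
  · linear_combination (P * lf v) * hd + (gd g * ge g 0 0 ^ 3 * lf v) * hA3

lemma S3transfer (hp3 : p ≠ 3) {v w : ZMod p} (hv : v ≠ 0) (g : GL2 R2)
    (h : gAct g (av v) = av v) : gAct g (av w) = av w := by
  obtain ⟨h1, h2, h3, h4⟩ := S3fwd hp3 hv g h
  exact S3bwd g h1 h2 h3 h4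

end Stab13max

section Stab13s

variable {p : ℕ} [Fact p.Prime]

local notation "R2" => ZMod (p ^ 2)
local notation "P" => ((p : ℕ) : ZMod (p ^ 2))

/-- Stabilizer conditions for `bv v`. -/
def stabCond (v : ZMod p) (g : GL2 (ZMod (p ^ 2))) : Prop :=
  ((p : ℕ) : ZMod (p ^ 2)) * (ge g 0 0 ^ 2 - 1) = 0 ∧
    3 * ge g 1 0 + 2 * ge g 0 0 * ge g 0 1 * (((p : ℕ) : ZMod (p ^ 2)) * lf v) = 0 ∧
    ge g 0 0 * ge g 1 1 = ge g 0 0 ^ 3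
      + ge g 0 0 * ge g 0 1 ^ 2 * (((p : ℕ) : ZMod (p ^ 2)) * lf v) + ge g 0 1 * ge g 1 0

lemma S4fwd (hp3 : p ≠ 3) {v : ZMod p} (hv : v ≠ 0) (g : GL2 R2)
    (h : gAct g (bv v) = bv v) : stabCond v g := by
  have hpp : P * P = 0 := pp_zero
  have hd : gd g * (ge g 0 0 * ge g 1 1 - ge g 0 1 * ge g 1 0) = 1 := d_spec g
  rw [bv, gAct_eq_iff] at h
  simp only [Matrix.cons_val_zero, Matrix.cons_val_one, Matrix.head_cons, Matrix.cons_val_two,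
    Matrix.cons_val_three, Matrix.tail_cons, Matrix.head_fin_const] at h
  obtain ⟨E1, E2, E3, E4⟩ := h
  set α := ge g 0 0 with hα
  set β := ge g 0 1 with hβ
  set γ := ge g 1 0 with hγ
  set δ := ge g 1 1 with hδ
  have F1 : α ^ 3 + α * β ^ 2 * (P * lf v) = (α * δ - β * γ) * 1 := by
    linear_combination (α * δ - β * γ) * E1 - (α ^ 3 * 1 + α ^ 2 * β * 0
      + α * β ^ 2 * (P * lf v) + β ^ 3 * 0) * hd
  have F2 : 3 * α ^ 2 * γ + (β ^ 2 * γ + 2 * α * β * δ) * (P * lf v) = 0 := by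
    linear_combination (α * δ - β * γ) * E2 - (3 * α ^ 2 * γ * 1
      + (α ^ 2 * δ + 2 * α * β * γ) * 0
      + (β ^ 2 * γ + 2 * α * β * δ) * (P * lf v) + 3 * β ^ 2 * δ * 0) * hd
  have F3 : 3 * α * γ ^ 2 + (α * δ ^ 2 + 2 * β * γ * δ) * (P * lf v)
      = (α * δ - β * γ) * (P * lf v) := by
    linear_combination (α * δ - β * γ) * E3 - (3 * α * γ ^ 2 * 1
      + (β * γ ^ 2 + 2 * α * γ * δ) * 0
      + (α * δ ^ 2 + 2 * β * γ * δ) * (P * lf v) + 3 * β * δ ^ 2 * 0) * hd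
  have F4 : γ ^ 3 + γ * δ ^ 2 * (P * lf v) = 0 := by
    linear_combination (α * δ - β * γ) * E4 - (γ ^ 3 * 1 + γ ^ 2 * δ * 0
      + γ * δ ^ 2 * (P * lf v) + δ ^ 3 * 0) * hd
  have heu : IsUnit (α * δ - β * γ) :=
    IsUnit.of_mul_eq_one _ (by rw [mul_comm] at hd; exact hd)
  have hEbar : pr p (α * δ - β * γ) ≠ 0 := pr_isUnit heu
  have hCzero : pr p γ = 0 := by
    have h4 : pr p γ ^ 3 = 0 := by
      simpa [map_add, map_mul, map_pow, map_zero, pr_p, mul_zero, zero_mul,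
        add_zero] using congrArg (pr p) F4
    exact pow_eq_zero_iff (n := 3) (by norm_num) |>.mp h4
  have hAE : pr p α ^ 3 = pr p (α * δ - β * γ) := by
    simpa [map_add, map_mul, map_pow, map_one, map_zero, pr_p, mul_zero, zero_mul, mul_one,
      add_zero] using congrArg (pr p) F1
  have hAbar : pr p α ≠ 0 := by
    intro h0
    exact hEbar (by rw [← hAE, h0]; ring)
  have hDbar : pr p δ ≠ 0 := by
    intro h0
    apply hEbar
    rw [map_sub, map_mul, map_mul, h0, hCzero, mul_zero, mul_zero, sub_zero]
  obtain ⟨c, hc⟩ := exists_pmul hCzero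
  have G3 : P * (α * δ ^ 2 * lf v) = P * (α * δ * lf v) := by
    rw [hc] at F3
    linear_combination F3 - (3 * α * c ^ 2 + 2 * β * c * δ * lf v + β * c * lf v) * hpp
  have hkey := pmul_eq_pmul_iff.mp G3
  simp only [map_mul, map_pow, pr_lf] at hkey
  -- D = 1
  have hD1 : pr p δ = 1 := by
    have hne : pr p α * (pr p δ * v) ≠ 0 := mul_ne_zero hAbar (mul_ne_zero hDbar hv)
    have hq : (pr p α * (pr p δ * v)) * pr p δ = (pr p α * (pr p δ * v)) * 1 := by
      linear_combination hkey
    exact mul_left_cancel₀ hne hq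
  have hδ1 : P * (δ - 1) = 0 := pmul_eq_zero_iff.mpr (by rw [map_sub, map_one, hD1, sub_self])
  -- A² = 1
  have hAD : pr p α ^ 3 = pr p α * pr p δ := by
    have hG1 := congrArg (pr p) F1
    rw [hc] at hG1
    simpa [map_add, map_mul, map_pow, map_one, map_zero, pr_p, mul_zero, zero_mul, mul_one,
      add_zero, map_sub] using hG1
  have hA2 : P * (α ^ 2 - 1) = 0 := by
    rw [pmul_eq_zero_iff, map_sub, map_pow, map_one]
    have hq : pr p α * pr p α ^ 2 = pr p α * 1 := by
      rw [hD1] at hAD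
      linear_combination hAD
    rw [mul_left_cancel₀ hAbar hq, sub_self]
  refine ⟨hA2, ?_, by show α * δ = _; linear_combination -F1⟩
  -- the γ condition
  show 3 * γ + 2 * α * β * (P * lf v) = 0
  rw [hc] at F2 ⊢
  linear_combination F2 - (β ^ 2 * c * lf v) * hpp - (2 * α * β * lf v) * hδ1 - (3 * c) * hA2

lemma S4bwd {v : ZMod p} (hp3 : p ≠ 3) (g : GL2 R2) (hcond : stabCond v g) :
    gAct g (bv v) = bv v := by
  obtain ⟨hA2, hB, hC⟩ := hcond
  have hpp : P * P = 0 := pp_zero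
  have h3i : (3 : R2) * 3⁻¹ = 1 := ZMod.mul_inv_of_unit _ (isUnit_three hp3)
  have hd : gd g * (ge g 0 0 * ge g 1 1 - ge g 0 1 * ge g 1 0) = 1 := d_spec g
  set α := ge g 0 0 with hα
  set β := ge g 0 1 with hβ
  set γ := ge g 1 0 with hγ
  set δ := ge g 1 1 with hδ
  have hγP : γ = P * (-(3⁻¹ * 2 * α * β * lf v)) := by
    linear_combination 3⁻¹ * hB - γ * h3i
  have hγγ : γ * γ = 0 := by rw [hγP]; exact pmul_pmul _ _
  have hPγ : P * γ = 0 := by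
    rw [hγP]; linear_combination (-(3⁻¹ * 2 * α * β * lf v)) * hpp
  have hγα : γ * (α ^ 2 - 1) = 0 := by
    rw [hγP]; linear_combination (-(3⁻¹ * 2 * α * β * lf v)) * hA2
  -- pr δ = 1
  have hA2bar : pr p α ^ 2 = 1 := by
    have := pmul_eq_zero_iff.mp hA2
    rw [map_sub, map_pow, map_one, sub_eq_zero] at this
    exact this
  have hAbar : pr p α ≠ 0 := by
    intro h0
    rw [h0] at hA2bar
    simp at hA2bar
  have hγbar : pr p γ = 0 := pmul_eq_zero_iff.mp hPγ
  have hD1 : pr p δ = 1 := by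
    have h1 := congrArg (pr p) hC
    simp only [map_mul, map_add, map_pow, pr_Pmul, pr_p, zero_mul, mul_zero, add_zero, hγbar] at h1
    have hq : pr p α * pr p δ = pr p α * 1 := by
      rw [h1, mul_one]
      calc pr p α ^ 3 = pr p α * pr p α ^ 2 := by ring
      _ = pr p α := by rw [hA2bar, mul_one]
    exact mul_left_cancel₀ hAbar hq
  have hPδ : P * δ = P := by
    have hz := (pmul_eq_pmul_iff (x := δ) (y := 1)).mpr (by simp [hD1])
    simpa using hz
  have hPe : P * (α * δ - β * γ) = P * α := by
    linear_combination α * hPδ - β * hPγ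
  rw [bv, gAct_eq_iff]
  simp only [Matrix.cons_val_zero, Matrix.cons_val_one, Matrix.head_cons, Matrix.cons_val_two,
    Matrix.cons_val_three, Matrix.tail_cons, Matrix.head_fin_const]
  refine ⟨?_, ?_, ?_, ?_⟩
  · linear_combination hd - gd g * hC
  · linear_combination gd g * hB + 3 * gd g * hγα + (gd g * β ^ 2 * lf v) * hPγ
      + (2 * gd g * α * β * lf v) * hPδ
  · linear_combination (3 * gd g * α) * hγγ + (2 * gd g * β * δ * lf v) * hPγ
      + (gd g * α * δ * lf v + gd g * α * lf v) * hPδ + (-(gd g * lf v)) * hPe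
      + (P * lf v) * hd
  · linear_combination (gd g * γ) * hγγ + (gd g * δ ^ 2 * lf v) * hPγ

lemma S4ext (hp3 : p ≠ 3) {v : ZMod p} (g g' : GL2 R2)
    (hc : stabCond v g) (hc' : stabCond v g')
    (h00 : ge g 0 0 = ge g' 0 0) (h01 : ge g 0 1 = ge g' 0 1) : g = g' := by
  obtain ⟨hA2, hB, hC⟩ := hc
  obtain ⟨hA2', hB', hC'⟩ := hc'
  have h3i : (3 : R2) * 3⁻¹ = 1 := ZMod.mul_inv_of_unit _ (isUnit_three hp3)
  have hAbar : pr p (ge g 0 0) ≠ 0 := by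
    intro h0
    have := pmul_eq_zero_iff.mp hA2
    rw [map_sub, map_pow, map_one, h0, sub_eq_zero] at this
    simp at this
  have hAu : IsUnit (ge g 0 0) := isUnit_iff_pr.mpr hAbar
  have h10 : ge g 1 0 = ge g' 1 0 := by
    rw [h00, h01] at hB
    linear_combination 3⁻¹ * hB - 3⁻¹ * hB' + (ge g' 1 0 - ge g 1 0) * h3i
  have h11 : ge g 1 1 = ge g' 1 1 := by
    rw [h00, h01, h10] at hC
    refine hAu.mul_left_cancel ?_
    rw [h00]
    linear_combination hC - hC'
  -- build the matrix equality
  apply Units.ext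
  apply Matrix.ext
  intro i j
  fin_cases i <;> fin_cases j
  · exact h00
  · exact h01
  · exact h10
  · exact h11

lemma S4mk (hp3 : p ≠ 3) (v : ZMod p) (α β : R2) (hA2 : P * (α ^ 2 - 1) = 0) :
    ∃ g : GL2 R2, ge g 0 0 = α ∧ ge g 0 1 = β ∧ stabCond v g := by
  have h3i : (3 : R2) * 3⁻¹ = 1 := ZMod.mul_inv_of_unit _ (isUnit_three hp3)
  have hA2bar : pr p α ^ 2 = 1 := by
    have := pmul_eq_zero_iff.mp hA2
    rw [map_sub, map_pow, map_one, sub_eq_zero] at this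
    exact this
  have hAbar : pr p α ≠ 0 := by
    intro h0
    rw [h0] at hA2bar
    simp at hA2bar
  have hAu : IsUnit α := isUnit_iff_pr.mpr hAbar
  have hαi : α * α⁻¹ = 1 := ZMod.mul_inv_of_unit _ hAu
  have hγ0bar : pr p (3⁻¹ * (-(2 * α * β * (P * lf v)))) = 0 := by
    simp only [map_mul, map_neg, pr_Pmul, pr_p, zero_mul, mul_zero, neg_zero]
  have hαδ : α * (α⁻¹ * (α ^ 3 + α * β ^ 2 * (P * lf v)
        + β * (3⁻¹ * (-(2 * α * β * (P * lf v))))))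
      = α ^ 3 + α * β ^ 2 * (P * lf v) + β * (3⁻¹ * (-(2 * α * β * (P * lf v)))) := by
    linear_combination (α ^ 3 + α * β ^ 2 * (P * lf v)
      + β * (3⁻¹ * (-(2 * α * β * (P * lf v))))) * hαi
  have hprod : pr p (α * (α⁻¹ * (α ^ 3 + α * β ^ 2 * (P * lf v)
      + β * (3⁻¹ * (-(2 * α * β * (P * lf v))))))) = pr p α ^ 3 := by
    rw [hαδ]
    simp only [map_add, map_mul, map_pow, map_neg, pr_Pmul, pr_p, mul_zero, add_zero, neg_zero,
      zero_mul]
  have hdet : IsUnit (α * (α⁻¹ * (α ^ 3 + α * β ^ 2 * (P * lf v)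
      + β * (3⁻¹ * (-(2 * α * β * (P * lf v))))))
      - β * (3⁻¹ * (-(2 * α * β * (P * lf v))))) := by
    rw [isUnit_iff_pr, map_sub, hprod, map_mul (pr p) β _, hγ0bar, mul_zero, sub_zero]
    exact pow_ne_zero _ hAbar
  refine ⟨mkGL α β _ _ hdet, ?_, ?_, ?_, ?_, ?_⟩
  · exact ge_mk00 _ _ _ _ _
  · exact ge_mk01 _ _ _ _ _
  · rw [ge_mk00]
    exact hA2
  · rw [ge_mk00, ge_mk01, ge_mk10]
    linear_combination (-(2 * α * β * (P * lf v))) * h3i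
  · rw [ge_mk00, ge_mk01, ge_mk10, ge_mk11]
    exact hαδ

lemma S4card (hp3 : p ≠ 3) {v : ZMod p} (hv : v ≠ 0) :
    Nat.card {g : GL2 R2 // gAct g (bv v) = bv v}
      = Nat.card {q : R2 × R2 // P * (q.1 ^ 2 - 1) = 0} := by
  apply Nat.card_eq_of_bijective
    (f := fun g => (⟨(ge g.1 0 0, ge g.1 0 1), (S4fwd hp3 hv g.1 g.2).1⟩ :
      {q : R2 × R2 // P * (q.1 ^ 2 - 1) = 0}))
  constructor
  · rintro ⟨g, hg⟩ ⟨g', hg'⟩ hq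
    simp only [Subtype.mk.injEq, Prod.mk.injEq] at hq
    exact Subtype.ext (S4ext hp3 g g' (S4fwd hp3 hv g hg) (S4fwd hp3 hv g' hg') hq.1 hq.2)
  · rintro ⟨⟨α, β⟩, hαβ⟩
    obtain ⟨g, h00, h01, hcond⟩ := S4mk hp3 v α β hαβ
    exact ⟨⟨g, S4bwd hp3 g hcond⟩, by simp [h00, h01]⟩

end Stab13s

section Classes

variable {p : ℕ} [Fact p.Prime]

lemma units_card (p : ℕ) [Fact p.Prime] : Nat.card (ZMod p)ˣ = p - 1 := by
  simp [Nat.card_eq_fintype_card, ZMod.card_units_eq_totient,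
    Nat.totient_prime (Fact.out : p.Prime)]

/-- relating power classes to discrete logs -/
lemma rel_iff_dvd (n : ℕ) (hn : n ∣ p - 1) (g : (ZMod p)ˣ)
    (hg : ∀ x : (ZMod p)ˣ, x ∈ Subgroup.zpowers g) (a b : ℤ) (u v : (ZMod p)ˣ)
    (hu : u = g ^ a) (hv : v = g ^ b) :
    (∃ t : (ZMod p)ˣ, u = t ^ n * v) ↔ (n : ℤ) ∣ a - b := by
  have hord : orderOf g = p - 1 := by
    rw [orderOf_eq_card_of_forall_mem_zpowers hg]
    exact units_card p
  constructor
  · rintro ⟨t, ht⟩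
    obtain ⟨m, hm⟩ := Subgroup.mem_zpowers_iff.mp (hg t)
    rw [hu, hv, ← hm, ← zpow_natCast, ← zpow_mul, ← zpow_add] at ht
    have hq : g ^ (a - (m * n + b)) = 1 := by
      rw [zpow_sub, ht, mul_inv_cancel]
    have hdvd : ((orderOf g : ℤ)) ∣ a - (m * n + b) :=
      orderOf_dvd_iff_zpow_eq_one.mpr hq
    rw [hord] at hdvd
    obtain ⟨k, hk⟩ := hdvd
    obtain ⟨l, hl⟩ := hn
    refine ⟨m + l * k, ?_⟩
    have hl' : ((p - 1 : ℕ) : ℤ) = (n : ℤ) * (l : ℤ) := by exact_mod_cast congrArg (Nat.cast : ℕ → ℤ) hl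
    rw [show a - b = (a - (m * (n : ℤ) + b)) + m * n by ring, hk, hl']
    ring
  · rintro ⟨k, hk⟩
    refine ⟨g ^ k, ?_⟩
    rw [hu, hv, ← zpow_natCast, ← zpow_mul, ← zpow_add]
    congr 1
    linear_combination hk

lemma unit_rel_iff {u v : ZMod p} (hu : u ≠ 0) (n : ℕ) (hn : 0 < n)
    (uu vv : (ZMod p)ˣ) (huu : (uu : ZMod p) = u) (hvv : (vv : ZMod p) = v) :
    (∃ t : ZMod p, u = t ^ n * v) ↔ (∃ t : (ZMod p)ˣ, uu = t ^ n * vv) := by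
  constructor
  · rintro ⟨t, ht⟩
    have ht0 : t ≠ 0 := by
      rintro rfl
      rw [zero_pow hn.ne', zero_mul] at ht
      exact hu ht
    refine ⟨Units.mk0 t ht0, Units.ext ?_⟩
    push_cast
    rw [huu, hvv, ht, Units.val_mk0]
  · rintro ⟨t, ht⟩
    refine ⟨(t : ZMod p), ?_⟩
    have := congrArg (Units.val) ht
    push_cast at this
    rw [huu, hvv] at this
    exact this

end Classes

section Covers

variable {p : ℕ} [Fact p.Prime]

lemma cube_surj (hp2 : p % 3 = 2) {v : ZMod p} (hv : v ≠ 0) :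
    ∃ t : ZMod p, v = t ^ 3 * 1 := by
  have hple : 2 ≤ p := (Fact.out : p.Prime).two_le
  have hcop : (Nat.card (ZMod p)ˣ).Coprime 3 := by
    rw [units_card]
    have h3 : ¬ (3 ∣ p - 1) := by omega
    exact Nat.coprime_comm.mp ((Nat.prime_three.coprime_iff_not_dvd).mpr h3)
  obtain ⟨t, ht⟩ := (powCoprime hcop).surjective (Units.mk0 v hv)
  refine ⟨(t : ZMod p), ?_⟩
  have h2 := congrArg Units.val ht
  rw [powCoprime_apply, Units.val_pow_eq_pow_val, Units.val_mk0] at h2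
  rw [mul_one, ← h2]

lemma cube_cover (hp1 : p % 3 = 1) {u₁ u₂ u₃ v : ZMod p}
    (h1 : u₁ ≠ 0) (h2 : u₂ ≠ 0) (h3 : u₃ ≠ 0) (hv : v ≠ 0)
    (h12 : ¬∃ t : ZMod p, u₁ = t ^ 3 * u₂) (h13 : ¬∃ t : ZMod p, u₁ = t ^ 3 * u₃)
    (h23 : ¬∃ t : ZMod p, u₂ = t ^ 3 * u₃) :
    (∃ t : ZMod p, v = t ^ 3 * u₁) ∨ (∃ t : ZMod p, v = t ^ 3 * u₂)
      ∨ (∃ t : ZMod p, v = t ^ 3 * u₃) := by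
  have hple : 2 ≤ p := (Fact.out : p.Prime).two_le
  have h3d : 3 ∣ p - 1 := by omega
  obtain ⟨g, hg⟩ := IsCyclic.exists_generator (α := (ZMod p)ˣ)
  obtain ⟨a1, ha1⟩ := Subgroup.mem_zpowers_iff.mp (hg (Units.mk0 u₁ h1))
  obtain ⟨a2, ha2⟩ := Subgroup.mem_zpowers_iff.mp (hg (Units.mk0 u₂ h2))
  obtain ⟨a3, ha3⟩ := Subgroup.mem_zpowers_iff.mp (hg (Units.mk0 u₃ h3))
  obtain ⟨b, hb⟩ := Subgroup.mem_zpowers_iff.mp (hg (Units.mk0 v hv))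
  have key : ∀ (x y : ZMod p) (hx : x ≠ 0) (hy : y ≠ 0) (ax ay : ℤ),
      g ^ ax = Units.mk0 x hx → g ^ ay = Units.mk0 y hy →
      ((∃ t : ZMod p, x = t ^ 3 * y) ↔ (3 : ℤ) ∣ ax - ay) := by
    intro x y hx hy ax ay hax hay
    rw [unit_rel_iff hx 3 (by norm_num) (Units.mk0 x hx) (Units.mk0 y hy)
      (Units.val_mk0 hx) (Units.val_mk0 hy)]
    exact rel_iff_dvd 3 h3d g hg ax ay _ _ hax.symm hay.symm
  have hd12 : ¬ (3 : ℤ) ∣ a1 - a2 := fun hd => h12 ((key u₁ u₂ h1 h2 a1 a2 ha1 ha2).mpr hd)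
  have hd13 : ¬ (3 : ℤ) ∣ a1 - a3 := fun hd => h13 ((key u₁ u₃ h1 h3 a1 a3 ha1 ha3).mpr hd)
  have hd23 : ¬ (3 : ℤ) ∣ a2 - a3 := fun hd => h23 ((key u₂ u₃ h2 h3 a2 a3 ha2 ha3).mpr hd)
  have hc1 : ((a1 : ZMod 3) ≠ (a2 : ZMod 3)) := by
    intro h
    exact hd12 (by
      have := (ZMod.intCast_eq_intCast_iff_dvd_sub a1 a2 3).mp h
      omega)
  have hc2 : ((a1 : ZMod 3) ≠ (a3 : ZMod 3)) := by
    intro h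
    exact hd13 (by
      have := (ZMod.intCast_eq_intCast_iff_dvd_sub a1 a3 3).mp h
      omega)
  have hc3 : ((a2 : ZMod 3) ≠ (a3 : ZMod 3)) := by
    intro h
    exact hd23 (by
      have := (ZMod.intCast_eq_intCast_iff_dvd_sub a2 a3 3).mp h
      omega)
  have hdec : ∀ x y z w : ZMod 3, x ≠ y → x ≠ z → y ≠ z → (w = x ∨ w = y ∨ w = z) := by decide
  rcases hdec (a1 : ZMod 3) (a2 : ZMod 3) (a3 : ZMod 3) (b : ZMod 3) hc1 hc2 hc3 with h | h | h
  · exact Or.inl ((key v u₁ hv h1 b a1 hb ha1).mpr (by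
      have := (ZMod.intCast_eq_intCast_iff_dvd_sub b a1 3).mp h
      omega))
  · exact Or.inr (Or.inl ((key v u₂ hv h2 b a2 hb ha2).mpr (by
      have := (ZMod.intCast_eq_intCast_iff_dvd_sub b a2 3).mp h
      omega)))
  · exact Or.inr (Or.inr ((key v u₃ hv h3 b a3 hb ha3).mpr (by
      have := (ZMod.intCast_eq_intCast_iff_dvd_sub b a3 3).mp h
      omega)))

lemma square_cover (hp2 : p ≠ 2) {u₁ u₂ v : ZMod p}
    (h1 : u₁ ≠ 0) (h2 : u₂ ≠ 0) (hv : v ≠ 0)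
    (h12 : ¬∃ t : ZMod p, u₁ = t ^ 2 * u₂) :
    (∃ t : ZMod p, v = t ^ 2 * u₁) ∨ (∃ t : ZMod p, v = t ^ 2 * u₂) := by
  have hple : 2 ≤ p := (Fact.out : p.Prime).two_le
  have hodd : p % 2 = 1 := by
    rcases (Fact.out : p.Prime).eq_two_or_odd with h | h
    · exact absurd h hp2
    · exact h
  have h2d : 2 ∣ p - 1 := by omega
  obtain ⟨g, hg⟩ := IsCyclic.exists_generator (α := (ZMod p)ˣ)
  obtain ⟨a1, ha1⟩ := Subgroup.mem_zpowers_iff.mp (hg (Units.mk0 u₁ h1))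
  obtain ⟨a2, ha2⟩ := Subgroup.mem_zpowers_iff.mp (hg (Units.mk0 u₂ h2))
  obtain ⟨b, hb⟩ := Subgroup.mem_zpowers_iff.mp (hg (Units.mk0 v hv))
  have key : ∀ (x y : ZMod p) (hx : x ≠ 0) (hy : y ≠ 0) (ax ay : ℤ),
      g ^ ax = Units.mk0 x hx → g ^ ay = Units.mk0 y hy →
      ((∃ t : ZMod p, x = t ^ 2 * y) ↔ (2 : ℤ) ∣ ax - ay) := by
    intro x y hx hy ax ay hax hay
    rw [unit_rel_iff hx 2 (by norm_num) (Units.mk0 x hx) (Units.mk0 y hy)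
      (Units.val_mk0 hx) (Units.val_mk0 hy)]
    exact rel_iff_dvd 2 h2d g hg ax ay _ _ hax.symm hay.symm
  have hd12 : ¬ (2 : ℤ) ∣ a1 - a2 := fun hd => h12 ((key u₁ u₂ h1 h2 a1 a2 ha1 ha2).mpr hd)
  have hc1 : ((a1 : ZMod 2) ≠ (a2 : ZMod 2)) := by
    intro h
    exact hd12 (by
      have := (ZMod.intCast_eq_intCast_iff_dvd_sub a1 a2 2).mp h
      omega)
  have hdec : ∀ x y w : ZMod 2, x ≠ y → (w = x ∨ w = y) := by decide
  rcases hdec (a1 : ZMod 2) (a2 : ZMod 2) (b : ZMod 2) hc1 with h | h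
  · exact Or.inl ((key v u₁ hv h1 b a1 hb ha1).mpr (by
      have := (ZMod.intCast_eq_intCast_iff_dvd_sub b a1 2).mp h
      omega))
  · exact Or.inr ((key v u₂ hv h2 b a2 hb ha2).mpr (by
      have := (ZMod.intCast_eq_intCast_iff_dvd_sub b a2 2).mp h
      omega))

end Covers

section OrbitCard

variable {p : ℕ} [Fact p.Prime]

local notation "R2" => ZMod (p ^ 2)

lemma orbit_stab (a : V R2) :
    Nat.card (orbitOf a) * Nat.card {g : GL2 R2 // gAct g a = a} = Nat.card (GL2 R2) := by
  letI sm : SMul (GL2 R2) (V R2) := ⟨gAct⟩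
  letI : MulAction (GL2 R2) (V R2) :=
    { toSMul := sm
      one_smul := gAct_one
      mul_smul := fun g h x => gAct_mul g h x }
  have horb : orbitOf a = MulAction.orbit (GL2 R2) a := by
    ext y
    constructor
    · rintro ⟨g, rfl⟩; exact ⟨g, rfl⟩
    · rintro ⟨g, rfl⟩; exact ⟨g, rfl⟩
  have e1 : orbitOf a ≃ MulAction.orbit (GL2 R2) a := Equiv.setCongr horb
  have e2 : MulAction.orbit (GL2 R2) a ≃ (GL2 R2) ⧸ MulAction.stabilizer (GL2 R2) a :=
    MulAction.orbitEquivQuotientStabilizer _ a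
  have e3 : {g : GL2 R2 // gAct g a = a} ≃ MulAction.stabilizer (GL2 R2) a :=
    Equiv.subtypeEquivRight (fun g => Iff.rfl)
  rw [Nat.card_congr e1, Nat.card_congr e2, Nat.card_congr e3]
  exact (Subgroup.card_eq_card_quotient_mul_card_subgroup _).symm

lemma orbit_card_eq {a b : V R2}
    (h : Nat.card {g : GL2 R2 // gAct g a = a} = Nat.card {g : GL2 R2 // gAct g b = b}) :
    Nat.card (orbitOf a) = Nat.card (orbitOf b) := by
  have ha := orbit_stab a
  have hb := orbit_stab b
  rw [h] at ha
  haveI : Nonempty {g : GL2 R2 // gAct g b = b} := ⟨⟨1, gAct_one b⟩⟩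
  have hpos : 0 < Nat.card {g : GL2 R2 // gAct g b = b} :=
    Nat.card_pos (α := {g : GL2 R2 // gAct g b = b})
  exact Nat.eq_of_mul_eq_mul_right hpos (ha.trans hb.symm)

end OrbitCard

section MainPieces

variable {p : ℕ} [Fact p.Prime]

local notation "R2" => ZMod (p ^ 2)
local notation "P" => ((p : ℕ) : ZMod (p ^ 2))

lemma Plf_ne_zero {v : ZMod p} (hv : v ≠ 0) : P * lf v ≠ 0 := by
  intro h
  exact hv (by rw [← pr_lf v]; exact pmul_eq_zero_iff.mp h)

lemma av_mem_D13max {v : ZMod p} (hv : v ≠ 0) : av v ∈ D13max p := by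
  refine ⟨by simp [av], ⟨0, by simp [av]⟩, ⟨0, by simp [av]⟩, ⟨lf v, by simp [av]⟩, ?_⟩
  show av v 3 ≠ 0
  simpa [av] using Plf_ne_zero hv

lemma bv_mem_D13s {v : ZMod p} (hv : v ≠ 0) : bv v ∈ D13s p := by
  refine ⟨by simp [bv], ⟨0, by simp [bv]⟩, ⟨⟨lf v, by simp [bv]⟩, ?_⟩, by simp [bv]⟩
  show bv v 2 ≠ 0
  simpa [bv] using Plf_ne_zero hv

lemma rel_symm (n : ℕ) {x y t : ZMod p} (ht : t ≠ 0) (h : y = t ^ n * x) :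
    ∃ s : ZMod p, x = s ^ n * y :=
  ⟨t⁻¹, by rw [h, ← mul_assoc, ← mul_pow, inv_mul_cancel₀ ht, one_pow, one_mul]⟩

lemma rel_flip {n : ℕ} (hn : 0 < n) {x y : ZMod p} (hy : y ≠ 0)
    (h : ∃ t : ZMod p, y = t ^ n * x) : ∃ s : ZMod p, x = s ^ n * y := by
  obtain ⟨t, ht⟩ := h
  have ht0 : t ≠ 0 := by
    rintro rfl
    rw [zero_pow hn.ne', zero_mul] at ht
    exact hy ht
  exact rel_symm n ht0 ht

lemma av_disjoint (hp3 : p ≠ 3) {x y : ZMod p} (hy : y ≠ 0)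
    (hne : ¬∃ t : ZMod p, x = t ^ 3 * y) :
    Disjoint (orbitOf (av x)) (orbitOf (av y)) := by
  rw [Set.disjoint_left]
  rintro z ⟨g, rfl⟩ hz
  have hmem : av x ∈ orbitOf (av y) := orbit_trans (orbit_symm ⟨g, rfl⟩) hz
  obtain ⟨k, hk⟩ := hmem
  obtain ⟨t, ht0, htr⟩ := N2c hp3 hy k hk.symm
  exact hne ⟨t, htr⟩

lemma bv_disjoint (hp3 : p ≠ 3) {x y : ZMod p} (hy : y ≠ 0)
    (hne : ¬∃ t : ZMod p, x = t ^ 2 * y) :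
    Disjoint (orbitOf (bv x)) (orbitOf (bv y)) := by
  rw [Set.disjoint_left]
  rintro z ⟨g, rfl⟩ hz
  have hmem : bv x ∈ orbitOf (bv y) := orbit_trans (orbit_symm ⟨g, rfl⟩) hz
  obtain ⟨k, hk⟩ := hmem
  obtain ⟨t, ht0, htr⟩ := N3c hp3 hy k hk.symm
  exact hne ⟨t, htr⟩

lemma av_orbit_card_eq (hp3 : p ≠ 3) {x y : ZMod p} (hx : x ≠ 0) (hy : y ≠ 0) :
    Nat.card (orbitOf (av (p := p) x)) = Nat.card (orbitOf (av (p := p) y)) := by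
  apply orbit_card_eq
  apply Nat.card_congr
  exact Equiv.subtypeEquivRight (fun g => ⟨S3transfer hp3 hx g, S3transfer hp3 hy g⟩)

lemma bv_orbit_card_eq (hp3 : p ≠ 3) {x y : ZMod p} (hx : x ≠ 0) (hy : y ≠ 0) :
    Nat.card (orbitOf (bv (p := p) x)) = Nat.card (orbitOf (bv (p := p) y)) := by
  apply orbit_card_eq
  rw [S4card hp3 hx, S4card hp3 hy]

end MainPieces

/-- Orbit structure of `V_{p²}(1³_**)`, `V_{p²}(1³_max)` and `V_{p²}(1³_*)` for `p ≠ 3`. -/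
theorem orbits_13_mod_p_sq (p : ℕ) [Fact p.Prime] (hp : p ≠ 3) :
    (V13ss p = orbitOf (![1, 0, 0, 0] : V (ZMod (p ^ 2)))) ∧
    (p % 3 = 2 → ∃ a ∈ V13max p, V13max p = orbitOf a) ∧
    (p % 3 = 1 → ∀ u₁ u₂ u₃ : ZMod p, u₁ ≠ 0 → u₂ ≠ 0 → u₃ ≠ 0 →
      (¬∃ t : ZMod p, u₁ = t ^ 3 * u₂) → (¬∃ t : ZMod p, u₁ = t ^ 3 * u₃) →
      (¬∃ t : ZMod p, u₂ = t ^ 3 * u₃) →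
      orbitOf (![1, 0, 0, (p : ZMod (p ^ 2)) * ((u₁.val : ZMod (p ^ 2)))] : V (ZMod (p ^ 2)))
          ∪ orbitOf (![1, 0, 0, (p : ZMod (p ^ 2)) * ((u₂.val : ZMod (p ^ 2)))] : V (ZMod (p ^ 2)))
          ∪ orbitOf (![1, 0, 0, (p : ZMod (p ^ 2)) * ((u₃.val : ZMod (p ^ 2)))] : V (ZMod (p ^ 2)))
        = V13max p ∧
      Pairwise (fun i j => Disjoint
        (orbitOf (![1, 0, 0, (p : ZMod (p ^ 2)) *
          ((![u₁, u₂, u₃] i).val : ZMod (p ^ 2))] : V (ZMod (p ^ 2))))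
        (orbitOf (![1, 0, 0, (p : ZMod (p ^ 2)) *
          ((![u₁, u₂, u₃] j).val : ZMod (p ^ 2))] : V (ZMod (p ^ 2))))) ∧
      (∀ i : Fin 3, 3 * Nat.card
          (orbitOf (![1, 0, 0, (p : ZMod (p ^ 2)) *
            ((![u₁, u₂, u₃] i).val : ZMod (p ^ 2))] : V (ZMod (p ^ 2))))
        = Nat.card (V13max p))) ∧
    (p ≠ 2 → ∀ u₁ u₂ : ZMod p, u₁ ≠ 0 → u₂ ≠ 0 → (¬∃ t : ZMod p, u₁ = t ^ 2 * u₂) →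
      orbitOf (![1, 0, (p : ZMod (p ^ 2)) * ((u₁.val : ZMod (p ^ 2))), 0] : V (ZMod (p ^ 2)))
          ∪ orbitOf (![1, 0, (p : ZMod (p ^ 2)) * ((u₂.val : ZMod (p ^ 2))), 0] : V (ZMod (p ^ 2)))
        = V13s p ∧
      Disjoint
        (orbitOf (![1, 0, (p : ZMod (p ^ 2)) * ((u₁.val : ZMod (p ^ 2))), 0] : V (ZMod (p ^ 2))))
        (orbitOf (![1, 0, (p : ZMod (p ^ 2)) * ((u₂.val : ZMod (p ^ 2))), 0] : V (ZMod (p ^ 2)))) ∧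
      (2 * Nat.card (orbitOf
          (![1, 0, (p : ZMod (p ^ 2)) * ((u₁.val : ZMod (p ^ 2))), 0] : V (ZMod (p ^ 2))))
        = Nat.card (V13s p)) ∧
      (2 * Nat.card (orbitOf
          (![1, 0, (p : ZMod (p ^ 2)) * ((u₂.val : ZMod (p ^ 2))), 0] : V (ZMod (p ^ 2))))
        = Nat.card (V13s p))) := by
  refine ⟨part_i hp, ?_, ?_, ?_⟩
  -- part (ii)
  · intro hp2
    have h1 : (1 : ZMod p) ≠ 0 := one_ne_zero
    refine ⟨av (1 : ZMod p), ⟨1, av 1, av_mem_D13max h1, (gAct_one _).symm⟩, ?_⟩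
    apply Set.Subset.antisymm
    · apply GOrbit_subset_orbitOf
      intro a ha
      obtain ⟨v, hv, hav⟩ := N2a hp a ha
      obtain ⟨t, ht⟩ := cube_surj hp2 hv
      exact orbit_trans hav (N2b hv ht)
    · exact orbitOf_subset_GOrbit (av_mem_D13max h1)
  -- part (iii)
  · intro hp1 u₁ u₂ u₃ h1 h2 h3 h12 h13 h23
    have hd12 : Disjoint (orbitOf (av u₁)) (orbitOf (av u₂)) := av_disjoint hp h2 h12
    have hd13 : Disjoint (orbitOf (av u₁)) (orbitOf (av u₃)) := av_disjoint hp h3 h13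
    have hd23 : Disjoint (orbitOf (av u₂)) (orbitOf (av u₃)) := av_disjoint hp h3 h23
    have hU : orbitOf (av u₁) ∪ orbitOf (av u₂) ∪ orbitOf (av u₃) = V13max p := by
      apply Set.Subset.antisymm
      · refine Set.union_subset (Set.union_subset ?_ ?_) ?_
        · exact orbitOf_subset_GOrbit (av_mem_D13max h1)
        · exact orbitOf_subset_GOrbit (av_mem_D13max h2)
        · exact orbitOf_subset_GOrbit (av_mem_D13max h3)
      · rintro x ⟨g, a, ha, rfl⟩
        obtain ⟨v, hv, hav⟩ := N2a hp a ha
        have hx : gAct g a ∈ orbitOf (av v) := orbit_trans ⟨g, rfl⟩ hav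
        rcases cube_cover hp1 h1 h2 h3 hv h12 h13 h23 with ⟨t, ht⟩ | ⟨t, ht⟩ | ⟨t, ht⟩
        · exact Or.inl (Or.inl (orbit_trans hx (N2b hv ht)))
        · exact Or.inl (Or.inr (orbit_trans hx (N2b hv ht)))
        · exact Or.inr (orbit_trans hx (N2b hv ht))
    have hk2 : Nat.card (orbitOf (av u₂)) = Nat.card (orbitOf (av u₁)) :=
      av_orbit_card_eq hp h2 h1
    have hk3 : Nat.card (orbitOf (av u₃)) = Nat.card (orbitOf (av u₁)) :=
      av_orbit_card_eq hp h3 h1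
    have hcV : Nat.card (V13max p) = 3 * Nat.card (orbitOf (av u₁)) := by
      have hfin : ∀ S : Set (V (ZMod (p ^ 2))), S.Finite := fun S => Set.toFinite S
      have hdU : Disjoint (orbitOf (av u₁) ∪ orbitOf (av u₂)) (orbitOf (av u₃)) :=
        Set.disjoint_union_left.mpr ⟨hd13, hd23⟩
      rw [← hU, Nat.card_coe_set_eq, Set.ncard_union_eq hdU (hfin _) (hfin _),
        Set.ncard_union_eq hd12 (hfin _) (hfin _), ← Nat.card_coe_set_eq,
        ← Nat.card_coe_set_eq, ← Nat.card_coe_set_eq, hk2, hk3]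
      ring
    refine ⟨hU, ?_, ?_⟩
    · intro i j hij
      fin_cases i <;> fin_cases j <;>
        first
          | (exfalso; exact hij rfl)
          | exact hd12
          | exact hd12.symm
          | exact hd13
          | exact hd13.symm
          | exact hd23
          | exact hd23.symm
    · intro i
      fin_cases i
      · show 3 * Nat.card (orbitOf (av u₁)) = Nat.card (V13max p)
        rw [hcV]
      · show 3 * Nat.card (orbitOf (av u₂)) = Nat.card (V13max p)
        rw [hk2, hcV]
      · show 3 * Nat.card (orbitOf (av u₃)) = Nat.card (V13max p)
        rw [hk3, hcV]
  -- part (iv)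
  · intro hp2 u₁ u₂ h1 h2 h12
    have hd : Disjoint (orbitOf (bv u₁)) (orbitOf (bv u₂)) := bv_disjoint hp h2 h12
    have hU : orbitOf (bv u₁) ∪ orbitOf (bv u₂) = V13s p := by
      apply Set.Subset.antisymm
      · refine Set.union_subset ?_ ?_
        · exact orbitOf_subset_GOrbit (bv_mem_D13s h1)
        · exact orbitOf_subset_GOrbit (bv_mem_D13s h2)
      · rintro x ⟨g, a, ha, rfl⟩
        obtain ⟨v, hv, hav⟩ := N3a hp a ha
        have hx : gAct g a ∈ orbitOf (bv v) := orbit_trans ⟨g, rfl⟩ hav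
        rcases square_cover hp2 h1 h2 hv h12 with ⟨t, ht⟩ | ⟨t, ht⟩
        · exact Or.inl (orbit_trans hx (N3b hv ht))
        · exact Or.inr (orbit_trans hx (N3b hv ht))
    have hk2 : Nat.card (orbitOf (bv u₂)) = Nat.card (orbitOf (bv u₁)) :=
      bv_orbit_card_eq hp h2 h1
    have hcV : Nat.card (V13s p) = 2 * Nat.card (orbitOf (bv u₁)) := by
      have hfin : ∀ S : Set (V (ZMod (p ^ 2))), S.Finite := fun S => Set.toFinite S
      rw [← hU, Nat.card_coe_set_eq, Set.ncard_union_eq hd (hfin _) (hfin _),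
        ← Nat.card_coe_set_eq, ← Nat.card_coe_set_eq, hk2]
      ring
    refine ⟨hU, hd, ?_, ?_⟩
    · show 2 * Nat.card (orbitOf (bv u₁)) = Nat.card (V13s p)
      rw [hcV]
    · show 2 * Nat.card (orbitOf (bv u₂)) = Nat.card (V13s p)
      rw [hk2, hcV]

end OrbitalL
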